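/- arXiv:1502.05652 — 6 statements merged into one kernel-verified Lean document; each statement's English description precedes it below -/
import Mathlib

section
/- Let T > 0, θ > 1 and ε₁, ε₂ > 0 satisfy ε₁ < (1 − 1/θ) · (θ ε₂)^{-1/(θ-1)}. Let f : [0,T] → ℝ be a continuous nonnegative function such that f(0) ≤ (θ ε₂)^{-1/(θ-1)} and f(t) ≤ ε₁ + ε₂ f(t)^θ for every t ∈ [0,T]. Then f(t) ≤ (θ/(θ−1)) ε₁ for every t ∈ [0,T]. -/
/-!
With `M = (θ ε₂)^(-1/(θ-1))` we have `ε₂ M^(θ-1) = 1/θ`, so for `0 ≤ x ≤ M` the inequality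
`x ≤ ε₁ + ε₂ x^θ` forces `x ≤ ε₁ + x/θ`, i.e. `x ≤ θ/(θ-1) ε₁`. The smallness of `ε₁` makes this
bound strictly less than `M`, so the values of `f` can never lie in `(θ/(θ-1) ε₁, M]`. As `f` starts
below `M` and is continuous, the intermediate value theorem keeps it below `θ/(θ-1) ε₁` throughout.
-/

theorem IsPreconnected.le_of_forall_le_imp_le {X α : Type*} [TopologicalSpace X]
    [LinearOrder α] [TopologicalSpace α] [OrderClosedTopology α] {S : Set X}
    (hS : IsPreconnected S) {f : X → α} (hf : ContinuousOn f S) {a : X} (ha : a ∈ S)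
    {B M : α} (hBM : B < M) (hfa : f a ≤ M) (hgap : ∀ t ∈ S, f t ≤ M → f t ≤ B) :
    ∀ t ∈ S, f t ≤ B := by
  intro t ht
  by_contra! hBt
  have hMt : M < f t := lt_of_not_ge fun h => hBt.not_ge (hgap t ht h)
  obtain ⟨s, hs, hfs⟩ := hS.intermediate_value ha ht hf ⟨hfa, hMt.le⟩
  exact hBM.not_ge (hfs ▸ hgap s hs hfs.le)

theorem Real.rpow_le_rpow_sub_one_mul {x M θ : ℝ} (hx : 0 ≤ x) (hxM : x ≤ M) (hθ : 1 ≤ θ) :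
    x ^ θ ≤ M ^ (θ - 1) * x := by
  calc x ^ θ = x ^ (θ - 1) * x := by
        rw [← Real.rpow_add_one' hx (by linarith), sub_add_cancel]
    _ ≤ M ^ (θ - 1) * x := by gcongr

theorem le_of_le_add_mul_rpow {θ ε₁ ε₂ x : ℝ} (hθ : 1 < θ) (hε₂ : 0 < ε₂) (hx : 0 ≤ x)
    (hxM : x ≤ (θ * ε₂) ^ (-(1 / (θ - 1)))) (hineq : x ≤ ε₁ + ε₂ * x ^ θ) :
    x ≤ θ / (θ - 1) * ε₁ := by
  have hθε₂ : 0 < θ * ε₂ := mul_pos (by linarith) hε₂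
  have hMpow : ((θ * ε₂) ^ (-(1 / (θ - 1)))) ^ (θ - 1) = (θ * ε₂)⁻¹ := by
    rw [← Real.rpow_mul hθε₂.le, neg_mul, one_div_mul_cancel (by linarith), Real.rpow_neg_one]
  have hpow : ε₂ * x ^ θ ≤ x / θ :=
    calc ε₂ * x ^ θ ≤ ε₂ * ((θ * ε₂)⁻¹ * x) := by
          gcongr; rw [← hMpow]; exact Real.rpow_le_rpow_sub_one_mul hx hxM hθ.le
      _ = x / θ := by field_simp
  rw [div_mul_eq_mul_div, le_div_iff₀ (by linarith)]
  have : x ≤ ε₁ + x / θ := hineq.trans (by linarith)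
  field_simp at this
  linarith

theorem stmt_0_general (T θ ε₁ ε₂ : ℝ) (hθ : 1 < θ) (hε₂ : 0 < ε₂)
    (hsmall : ε₁ < (1 - 1/θ) * (θ * ε₂) ^ (-(1/(θ-1))))
    (f : ℝ → ℝ) (hcont : ContinuousOn f (Set.Icc 0 T))
    (hpos : ∀ t ∈ Set.Icc (0:ℝ) T, 0 ≤ f t)
    (hf0 : f 0 ≤ (θ * ε₂) ^ (-(1/(θ-1))))
    (hineq : ∀ t ∈ Set.Icc (0:ℝ) T, f t ≤ ε₁ + ε₂ * f t ^ θ) :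
    ∀ t ∈ Set.Icc (0:ℝ) T, f t ≤ (θ/(θ-1)) * ε₁ := by
  intro t ht
  have hBM : θ / (θ - 1) * ε₁ < (θ * ε₂) ^ (-(1 / (θ - 1))) := by
    have hθ' : 0 < θ - 1 := by linarith
    rw [div_mul_eq_mul_div, div_lt_iff₀ hθ']
    rw [one_sub_div (by linarith)] at hsmall
    field_simp at hsmall
    linarith
  exact isPreconnected_Icc.le_of_forall_le_imp_le hcont ⟨le_rfl, ht.1.trans ht.2⟩ hBM hf0
    (fun s hs hsM => le_of_le_add_mul_rpow hθ hε₂ (hpos s hs) hsM (hineq s hs)) t ht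

/-- Bootstrap (continuity) argument: a continuous nonnegative function satisfying a
self-improving inequality `f t ≤ ε₁ + ε₂ f t ^ θ` with `θ > 1`, small at `t = 0`,
stays bounded by `(θ/(θ-1)) ε₁` on `[0, T]`. -/
theorem stmt_0 (T θ ε₁ ε₂ : ℝ) (hT : 0 < T) (hθ : 1 < θ) (hε₁ : 0 < ε₁) (hε₂ : 0 < ε₂)
    (hsmall : ε₁ < (1 - 1/θ) * (θ * ε₂) ^ (-(1/(θ-1))))
    (f : ℝ → ℝ) (hcont : ContinuousOn f (Set.Icc 0 T))
    (hpos : ∀ t ∈ Set.Icc (0:ℝ) T, 0 ≤ f t)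
    (hf0 : f 0 ≤ (θ * ε₂) ^ (-(1/(θ-1))))
    (hineq : ∀ t ∈ Set.Icc (0:ℝ) T, f t ≤ ε₁ + ε₂ * f t ^ θ) :
    ∀ t ∈ Set.Icc (0:ℝ) T, f t ≤ (θ/(θ-1)) * ε₁ :=
  stmt_0_general T θ ε₁ ε₂ hθ hε₂ hsmall f hcont hpos hf0 hineq
end

section
/- Let d ≥ 1, μ > 1, and let Q : ℝ → Matrix (Fin d) (Fin d) ℝ be a continuous map taking values in symmetric matrices and satisfying ‖Q(t)‖ ≤ C (1 + |t|)^{-μ-2} for all t, for some constant C > 0. Then there exists t₀ < 0 such that the matrix Riccati initial value problem M'(t) + M(t)² + Q(t) = 0, M(t₀) = (1/t₀)·I_d, has a unique C¹ solution M defined on all of (−∞, t₀], taking values in symmetric matrices; moreover there is a constant C' such that ‖M(t) − (1/t)·I_d‖ ≤ C'/t² for all t ≤ t₀. -/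
attribute [local instance] Matrix.normedAddCommGroup Matrix.normedSpace

/-!
Writing `M t = t⁻¹ • 1 + (t ^ 2)⁻¹ • S t` turns the Riccati equation into
`S' = -((t ^ 2)⁻¹ • S ^ 2 + t ^ 2 • Q)` with `S t₀ = 0`, i.e. into the integral equation
`S t = ∫ s in t..t₀, ((s ^ 2)⁻¹ • S s ^ 2 + s ^ 2 • Q s)`. Since `∫ s in -∞..t₀, (s ^ 2)⁻¹ = |t₀|⁻¹`
and the decay of `Q` with `μ > 1` makes `s ^ 2 • Q s` integrable, for `t₀` far enough to the left
the right-hand side is a contraction of the unit ball of bounded continuous functions, and its fixed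
point gives the solution together with the bound `‖M t - t⁻¹ • 1‖ ≤ 1 / t ^ 2`. Uniqueness is
Grönwall for the locally Lipschitz field `X ↦ -(X * X + Q t)`, and symmetry follows from
uniqueness because `t ↦ (M t)ᵀ` solves the same problem.
-/

open Set Filter MeasureTheory Topology
open scoped Matrix BoundedContinuousFunction

namespace Matrix

variable {n : Type*} [Fintype n]

theorem norm_mul_le_card_mul (A B : Matrix n n ℝ) :
    ‖A * B‖ ≤ Fintype.card n * ‖A‖ * ‖B‖ := by
  rw [norm_le_iff (by positivity)]
  intro i j
  calc ‖(A * B) i j‖ ≤ ∑ k, ‖A i k‖ * ‖B k j‖ := by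
        simpa only [mul_apply, norm_mul] using norm_sum_le Finset.univ fun k => A i k * B k j
    _ ≤ ∑ _k : n, ‖A‖ * ‖B‖ := by
        gcongr with k
        exacts [norm_entry_le_entrywise_sup_norm A, norm_entry_le_entrywise_sup_norm B]
    _ = Fintype.card n * ‖A‖ * ‖B‖ := by simp [mul_assoc]

theorem norm_mul_self_sub_mul_self_le (A B : Matrix n n ℝ) :
    ‖A * A - B * B‖ ≤ Fintype.card n * (‖A‖ + ‖B‖) * ‖A - B‖ := by
  calc ‖A * A - B * B‖ = ‖A * (A - B) + (A - B) * B‖ := by congr 1; noncomm_ring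
    _ ≤ Fintype.card n * ‖A‖ * ‖A - B‖ + Fintype.card n * ‖A - B‖ * ‖B‖ :=
        (norm_add_le _ _).trans (add_le_add (norm_mul_le_card_mul _ _) (norm_mul_le_card_mul _ _))
    _ = Fintype.card n * (‖A‖ + ‖B‖) * ‖A - B‖ := by ring

end Matrix

theorem HasDerivWithinAt.matrix_transpose {m n : Type*} [Fintype m] [Fintype n]
    {M : ℝ → Matrix m n ℝ} {M' : Matrix m n ℝ} {s : Set ℝ} {t : ℝ}
    (h : HasDerivWithinAt M M' s t) : HasDerivWithinAt (fun t => (M t)ᵀ) M'ᵀ s t :=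
  (LinearMap.toContinuousLinearMap
    (Matrix.transposeLinearEquiv m n ℝ ℝ).toLinearMap).hasFDerivAt.comp_hasDerivWithinAt t h

theorem integral_inv_sq_le {a b : ℝ} (hab : a ≤ b) (hb : b < 0) :
    ∫ s in a..b, (s ^ 2)⁻¹ ≤ (-b)⁻¹ := by
  have hne : ∀ s ∈ uIcc a b, s ≠ 0 := fun s hs =>
    ((uIcc_of_le hab ▸ hs).2.trans_lt hb).ne
  have hderiv : ∀ s ∈ uIcc a b, HasDerivAt (fun x : ℝ => -x⁻¹) (s ^ 2)⁻¹ s := fun s hs =>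
    (hasDerivAt_inv (hne s hs)).neg.congr_deriv (neg_neg _)
  rw [intervalIntegral.integral_eq_sub_of_hasDerivAt hderiv
    ((continuousOn_pow 2).inv₀ fun s hs => pow_ne_zero 2 (hne s hs)).intervalIntegrable]
  have : a⁻¹ ≤ 0 := inv_nonpos.2 (hab.trans hb.le)
  rw [inv_neg]; linarith

theorem norm_intervalIntegral_le_of_norm_le_inv_sq_add {E : Type*} [NormedAddCommGroup E]
    [NormedSpace ℝ E] {f : ℝ → E} {h : ℝ → ℝ} {a b c : ℝ} (hab : a ≤ b) (hb : b < 0)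
    (hc : 0 ≤ c) (hf : ∀ s ∈ Icc a b, ‖f s‖ ≤ c * (s ^ 2)⁻¹ + h s)
    (hh : IntegrableOn h (Iic b)) (hh₀ : ∀ s, 0 ≤ h s) :
    ‖∫ s in a..b, f s‖ ≤ c * (-b)⁻¹ + ∫ s in Iic b, h s := by
  have hinv : IntervalIntegrable (fun s : ℝ => c * (s ^ 2)⁻¹) volume a b :=
    (continuousOn_const.mul ((continuousOn_pow 2).inv₀ fun s hs =>
      pow_ne_zero 2 ((uIcc_of_le hab ▸ hs).2.trans_lt hb).ne)).intervalIntegrable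
  have hhab : IntervalIntegrable h volume a b :=
    (intervalIntegrable_iff_integrableOn_Icc_of_le hab).2 (hh.mono_set Icc_subset_Iic_self)
  calc ‖∫ s in a..b, f s‖ ≤ ∫ s in a..b, (c * (s ^ 2)⁻¹ + h s) :=
        intervalIntegral.norm_integral_le_of_norm_le hab
          (ae_of_all _ fun s hs => hf s (Ioc_subset_Icc_self hs)) (hinv.add hhab)
    _ = c * (∫ s in a..b, (s ^ 2)⁻¹) + ∫ s in a..b, h s := by
        rw [intervalIntegral.integral_add hinv hhab, intervalIntegral.integral_const_mul]
    _ ≤ c * (-b)⁻¹ + ∫ s in Iic b, h s := by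
        gcongr
        · exact integral_inv_sq_le hab hb
        · rw [intervalIntegral.integral_of_le hab]
          exact setIntegral_mono_set hh (ae_of_all _ hh₀) Ioc_subset_Iic_self.eventuallyLE

theorem integrable_norm_sq_smul_of_norm_le {E : Type*} [NormedAddCommGroup E] [NormedSpace ℝ E]
    {Q : ℝ → E} {μ C : ℝ} (hμ : 1 < μ) (hQ : Continuous Q)
    (hQ_le : ∀ t, ‖Q t‖ ≤ C * (1 + |t|) ^ (-μ - 2)) :
    Integrable fun s : ℝ => ‖s ^ 2 • Q s‖ := by
  refine ((integrable_one_add_norm (by simpa using hμ)).const_mul C).mono'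
    (by fun_prop) (ae_of_all _ fun s => ?_)
  have h1 : 0 < 1 + |s| := by positivity
  calc ‖‖s ^ 2 • Q s‖‖ = |s| ^ 2 * ‖Q s‖ := by simp [norm_smul]
    _ ≤ (1 + |s|) ^ (2 : ℝ) * (C * (1 + |s|) ^ (-μ - 2)) := by
        rw [Real.rpow_two]
        have := (norm_nonneg _).trans (hQ_le s)
        gcongr
        · linarith
        · exact hQ_le s
    _ = C * (1 + ‖s‖) ^ (-μ) := by
        rw [mul_left_comm, ← Real.rpow_add h1, Real.norm_eq_abs]; ring_nf

namespace Riccati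

variable {n : Type*} [Fintype n] {Q S : ℝ → Matrix n n ℝ} {t₀ : ℝ}

def IsSolutionOn (Q : ℝ → Matrix n n ℝ) (t₀ : ℝ) (M : ℝ → Matrix n n ℝ) : Prop :=
  ∀ t ∈ Iic t₀, HasDerivWithinAt M (-(M t * M t + Q t)) (Iic t₀) t

theorem lipschitzOnWith_neg_mul_self_add (A : Matrix n n ℝ) (ρ : NNReal) :
    LipschitzOnWith (2 * Fintype.card n * ρ) (fun X => -(X * X + A))
      (Metric.closedBall 0 ρ) := by
  refine LipschitzOnWith.of_dist_le_mul fun X hX Y hY => ?_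
  rw [mem_closedBall_zero_iff] at hX hY
  calc dist (-(X * X + A)) (-(Y * Y + A)) = ‖X * X - Y * Y‖ := by
        rw [dist_eq_norm, ← norm_neg]; congr 1; abel
    _ ≤ Fintype.card n * (‖X‖ + ‖Y‖) * ‖X - Y‖ := Matrix.norm_mul_self_sub_mul_self_le X Y
    _ ≤ Fintype.card n * (ρ + ρ) * ‖X - Y‖ := by gcongr
    _ = ↑(2 * Fintype.card n * ρ : NNReal) * dist X Y := by
        rw [dist_eq_norm]; push_cast; ring

namespace IsSolutionOn

variable {M N : ℝ → Matrix n n ℝ}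

theorem continuousOn (hM : IsSolutionOn Q t₀ M) : ContinuousOn M (Iic t₀) :=
  fun t ht => (hM t ht).continuousWithinAt

theorem eqOn (hM : IsSolutionOn Q t₀ M) (hN : IsSolutionOn Q t₀ N) (h₀ : M t₀ = N t₀) :
    EqOn M N (Iic t₀) := by
  intro t ht
  obtain ⟨c, hc⟩ := isCompact_Icc.exists_bound_of_continuousOn
    ((hM.continuousOn.mono Icc_subset_Iic_self).prodMk (hN.continuousOn.mono Icc_subset_Iic_self))
  have hball {F : ℝ → Matrix n n ℝ} (hF : ∀ x ∈ Icc t t₀, ‖F x‖ ≤ ‖(M x, N x)‖) :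
      ∀ x ∈ Ioc t t₀, F x ∈ Metric.closedBall 0 c.toNNReal := fun x hx =>
    mem_closedBall_zero_iff.2 <| ((hF x (Ioc_subset_Icc_self hx)).trans
      (hc x (Ioc_subset_Icc_self hx))).trans (Real.le_coe_toNNReal c)
  have hderiv {F : ℝ → Matrix n n ℝ} (hF : IsSolutionOn Q t₀ F) :
      ∀ x ∈ Ioc t t₀, HasDerivWithinAt F (-(F x * F x + Q x)) (Iic x) x := fun x hx =>
    (hF x hx.2).mono (Iic_subset_Iic.2 hx.2)
  exact ODE_solution_unique_of_mem_Icc_left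
    (fun x _ => lipschitzOnWith_neg_mul_self_add (Q x) c.toNNReal)
    (hM.continuousOn.mono Icc_subset_Iic_self) (hderiv hM) (hball fun x _ => norm_fst_le (M x, N x))
    (hN.continuousOn.mono Icc_subset_Iic_self) (hderiv hN) (hball fun x _ => norm_snd_le (M x, N x))
    h₀ ⟨le_rfl, ht⟩

theorem transpose (hQ : ∀ t, (Q t).IsSymm) (hM : IsSolutionOn Q t₀ M) :
    IsSolutionOn Q t₀ fun t => (M t)ᵀ := fun t ht => by
  simpa only [Matrix.transpose_neg, Matrix.transpose_add, Matrix.transpose_mul, (hQ t).eq]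
    using (hM t ht).matrix_transpose

theorem isSymm (hQ : ∀ t, (Q t).IsSymm) (hM : IsSolutionOn Q t₀ M) (h₀ : (M t₀).IsSymm) :
    ∀ t ∈ Iic t₀, (M t).IsSymm :=
  (hM.transpose hQ).eqOn hM h₀

end IsSolutionOn

/-- Only `s ≤ t₀` matters; the clamp `min s t₀` makes the integrand continuous on all of `ℝ`. -/
noncomputable def integrand (Q : ℝ → Matrix n n ℝ) (t₀ : ℝ) (S : ℝ → Matrix n n ℝ) (s : ℝ) :
    Matrix n n ℝ :=
  (min s t₀ ^ 2)⁻¹ • (S s * S s) + s ^ 2 • Q s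

noncomputable def integralMap (Q : ℝ → Matrix n n ℝ) (t₀ : ℝ) (S : ℝ → Matrix n n ℝ) (t : ℝ) :
    Matrix n n ℝ :=
  ∫ s in min t t₀..t₀, integrand Q t₀ S s

theorem continuous_integrand (hQ : Continuous Q) (ht₀ : t₀ < 0) (hS : Continuous S) :
    Continuous (integrand Q t₀ S) :=
  ((((continuous_id.min continuous_const).pow 2).inv₀ fun s =>
    pow_ne_zero 2 ((min_le_right s t₀).trans_lt ht₀).ne).smul (hS.mul hS)).add
    ((continuous_pow 2).smul hQ)

theorem hasDerivWithinAt_integralMap (hQ : Continuous Q) (ht₀ : t₀ < 0) (hS : Continuous S)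
    {t : ℝ} (ht : t ≤ t₀) :
    HasDerivWithinAt (integralMap Q t₀ S) (-integrand Q t₀ S t) (Iic t₀) t := by
  have hprim := ((continuous_integrand hQ ht₀ hS).integral_hasStrictDerivAt t₀ t).hasDerivAt
  refine hprim.neg.hasDerivWithinAt.congr (fun u hu => ?_) ?_
  · rw [integralMap, min_eq_left (mem_Iic.1 hu), intervalIntegral.integral_symm]; rfl
  · rw [integralMap, min_eq_left ht, intervalIntegral.integral_symm]; rfl

theorem continuous_integralMap (hQ : Continuous Q) (ht₀ : t₀ < 0) (hS : Continuous S) :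
    Continuous (integralMap Q t₀ S) := by
  have : integralMap Q t₀ S = fun t => -∫ s in t₀..min t t₀, integrand Q t₀ S s := by
    funext t; exact intervalIntegral.integral_symm _ _
  rw [this]
  exact ((intervalIntegral.continuous_primitive (continuous_integrand hQ ht₀ hS).intervalIntegrable
    t₀).comp (continuous_id.min continuous_const)).neg

theorem norm_integralMap_le (ht₀ : t₀ < 0) (hS : ∀ s, ‖S s‖ ≤ 1)
    (hQint : IntegrableOn (fun s => ‖s ^ 2 • Q s‖) (Iic t₀)) (t : ℝ) :
    ‖integralMap Q t₀ S t‖ ≤ Fintype.card n * (-t₀)⁻¹ + ∫ s in Iic t₀, ‖s ^ 2 • Q s‖ := by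
  refine norm_intervalIntegral_le_of_norm_le_inv_sq_add (min_le_right t t₀) ht₀ (by positivity)
    (fun s hs => ?_) hQint fun _ => norm_nonneg _
  have hSS : ‖S s * S s‖ ≤ Fintype.card n := by
    simpa using (Matrix.norm_mul_le_card_mul _ _).trans
      (by gcongr; exacts [hS s, hS s] : _ ≤ (Fintype.card n : ℝ) * 1 * 1)
  calc ‖integrand Q t₀ S s‖ ≤ (s ^ 2)⁻¹ * ‖S s * S s‖ + ‖s ^ 2 • Q s‖ := by
        rw [integrand, min_eq_left hs.2, ← norm_smul_of_nonneg (by positivity)]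
        exact norm_add_le _ _
    _ ≤ Fintype.card n * (s ^ 2)⁻¹ + ‖s ^ 2 • Q s‖ := by
        rw [mul_comm (Fintype.card n : ℝ)]; gcongr

theorem norm_integralMap_sub_le (hQ : Continuous Q) (ht₀ : t₀ < 0) {S₁ S₂ : ℝ → Matrix n n ℝ}
    (hS₁ : Continuous S₁) (hS₂ : Continuous S₂) (hS₁_le : ∀ s, ‖S₁ s‖ ≤ 1)
    (hS₂_le : ∀ s, ‖S₂ s‖ ≤ 1) {δ : ℝ} (hδ : ∀ s, ‖S₁ s - S₂ s‖ ≤ δ) (t : ℝ) :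
    ‖integralMap Q t₀ S₁ t - integralMap Q t₀ S₂ t‖ ≤ 2 * Fintype.card n * δ * (-t₀)⁻¹ := by
  have hδ₀ : 0 ≤ δ := (norm_nonneg _).trans (hδ 0)
  rw [integralMap, integralMap, ← intervalIntegral.integral_sub
    ((continuous_integrand hQ ht₀ hS₁).intervalIntegrable _ _)
    ((continuous_integrand hQ ht₀ hS₂).intervalIntegrable _ _)]
  refine (norm_intervalIntegral_le_of_norm_le_inv_sq_add (c := 2 * Fintype.card n * δ)
    (min_le_right t t₀) ht₀ (by positivity) (fun s hs => ?_) integrableOn_zero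
    fun _ => le_rfl).trans_eq (by simp only [integral_zero, add_zero])
  calc ‖integrand Q t₀ S₁ s - integrand Q t₀ S₂ s‖
      = (s ^ 2)⁻¹ * ‖S₁ s * S₁ s - S₂ s * S₂ s‖ := by
        rw [integrand, integrand, min_eq_left hs.2, add_sub_add_right_eq_sub, ← smul_sub,
          norm_smul_of_nonneg (by positivity)]
    _ ≤ (s ^ 2)⁻¹ * (Fintype.card n * (1 + 1) * δ) := by
        gcongr
        refine (Matrix.norm_mul_self_sub_mul_self_le _ _).trans ?_
        gcongr
        exacts [hS₁_le s, hS₂_le s, hδ s]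
    _ = 2 * Fintype.card n * δ * (s ^ 2)⁻¹ + 0 := by ring

theorem exists_integralMap_eq (hQ : Continuous Q) (ht₀ : t₀ < 0)
    (hcard : Fintype.card n * (-t₀)⁻¹ ≤ 1 / 4)
    (hQint : IntegrableOn (fun s => ‖s ^ 2 • Q s‖) (Iic t₀))
    (htail : ∫ s in Iic t₀, ‖s ^ 2 • Q s‖ ≤ 1 / 2) :
    ∃ S : ℝ → Matrix n n ℝ, Continuous S ∧ (∀ t, ‖S t‖ ≤ 1) ∧ integralMap Q t₀ S = S := by
  let B := Metric.closedBall (0 : ℝ →ᵇ Matrix n n ℝ) 1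
  have hB (S : B) (t : ℝ) : ‖S.1 t‖ ≤ 1 :=
    (S.1.norm_coe_le_norm t).trans (mem_closedBall_zero_iff.1 S.2)
  have hmaps (S : B) (t : ℝ) : ‖integralMap Q t₀ S.1 t‖ ≤ 1 := by
    linarith [norm_integralMap_le ht₀ (hB S) hQint t]
  let Φ : B → B := fun S =>
    ⟨.ofNormedAddCommGroup _ (continuous_integralMap hQ ht₀ S.1.continuous) 1 (hmaps S),
      mem_closedBall_zero_iff.2
        (BoundedContinuousFunction.norm_ofNormedAddCommGroup_le _ zero_le_one _)⟩
  have : CompleteSpace B := Metric.isClosed_closedBall.completeSpace_coe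
  have : Nonempty B := ⟨⟨0, Metric.mem_closedBall_self zero_le_one⟩⟩
  have hΦ : ContractingWith (1 / 2) Φ := by
    refine ⟨by rw [← NNReal.coe_lt_coe]; norm_num, LipschitzWith.of_dist_le_mul fun S₁ S₂ => ?_⟩
    rw [Subtype.dist_eq, BoundedContinuousFunction.dist_le (by positivity)]
    intro t
    calc dist (integralMap Q t₀ S₁.1 t) (integralMap Q t₀ S₂.1 t)
        ≤ 2 * Fintype.card n * dist S₁ S₂ * (-t₀)⁻¹ := by
          rw [dist_eq_norm]
          exact norm_integralMap_sub_le hQ ht₀ S₁.1.continuous S₂.1.continuous (hB S₁) (hB S₂)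
            (fun s => by rw [← dist_eq_norm]; exact S₁.1.dist_coe_le_dist s) t
      _ ≤ ↑(1 / 2 : NNReal) * dist S₁ S₂ := by
          push_cast
          nlinarith [dist_nonneg (x := S₁) (y := S₂)]
  set S := hΦ.fixedPoint Φ
  refine ⟨S.1, S.1.continuous, hB S, ?_⟩
  exact congrArg (fun S : B => ⇑S.1) hΦ.fixedPoint_isFixedPt

theorem eventually_exists_integralMap_eq (hQ : Continuous Q)
    (hQint : Integrable fun s => ‖s ^ 2 • Q s‖) :
    ∀ᶠ t₀ : ℝ in atBot, t₀ < 0 ∧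
      ∃ S : ℝ → Matrix n n ℝ, Continuous S ∧ (∀ t, ‖S t‖ ≤ 1) ∧ integralMap Q t₀ S = S := by
  have hcard : Tendsto (fun t : ℝ => Fintype.card n * (-t)⁻¹) atBot (𝓝 0) := by
    simpa using (tendsto_inv_atTop_zero.comp tendsto_neg_atBot_atTop).const_mul (Fintype.card n : ℝ)
  filter_upwards [eventually_lt_atBot 0,
    hcard.eventually (ge_mem_nhds (by norm_num : (0 : ℝ) < 1 / 4)),
    (tendsto_integral_Iic_zero tendsto_id).eventually (ge_mem_nhds (by norm_num : (0 : ℝ) < 1 / 2))]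
    with t₀ ht₀ hcard_le htail
  exact ⟨ht₀, exists_integralMap_eq hQ ht₀ hcard_le hQint.integrableOn htail⟩

/-- `t⁻¹ • 1` solves the Riccati equation with `Q = 0`. -/
noncomputable def ofCorrection [DecidableEq n] (S : ℝ → Matrix n n ℝ) (t : ℝ) : Matrix n n ℝ :=
  t⁻¹ • 1 + (t ^ 2)⁻¹ • S t

variable [DecidableEq n]

theorem norm_ofCorrection_sub (t : ℝ) : ‖ofCorrection S t - t⁻¹ • 1‖ = ‖S t‖ / t ^ 2 := by
  rw [ofCorrection, add_sub_cancel_left, norm_smul_of_nonneg (by positivity), inv_mul_eq_div]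

theorem hasDerivWithinAt_ofCorrection {A : Matrix n n ℝ} {s : Set ℝ} {t : ℝ} (ht : t ≠ 0)
    (hS : HasDerivWithinAt S (-((t ^ 2)⁻¹ • (S t * S t) + t ^ 2 • A)) s t) :
    HasDerivWithinAt (ofCorrection S) (-(ofCorrection S t * ofCorrection S t + A)) s t := by
  have hinv := ((hasDerivAt_inv ht).smul_const (1 : Matrix n n ℝ)).hasDerivWithinAt (s := s)
  have hsq := ((hasDerivAt_pow 2 t).inv (pow_ne_zero 2 ht)).hasDerivWithinAt (s := s)
  refine (hinv.add (hsq.smul hS)).congr_deriv ?_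
  simp only [ofCorrection, Pi.inv_apply, add_mul, mul_add, smul_mul_assoc, mul_smul_comm, one_mul,
    mul_one]
  match_scalars <;> field_simp
  ring

theorem isSolutionOn_ofCorrection (hQ : Continuous Q) (ht₀ : t₀ < 0) (hS : Continuous S)
    (hSeq : integralMap Q t₀ S = S) : IsSolutionOn Q t₀ (ofCorrection S) := fun t ht => by
  have hderiv := hasDerivWithinAt_integralMap hQ ht₀ hS ht
  rw [hSeq, integrand, min_eq_left ht] at hderiv
  exact hasDerivWithinAt_ofCorrection (ht.trans_lt ht₀).ne hderiv

end Riccati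

theorem stmt_1_general (d : ℕ) (μ C : ℝ) (hμ : 1 < μ)
    (Q : ℝ → Matrix (Fin d) (Fin d) ℝ) (hQc : Continuous Q)
    (hQsym : ∀ t, (Q t).IsSymm)
    (hQbound : ∀ t : ℝ, ‖Q t‖ ≤ C * (1 + |t|) ^ (-μ - 2)) :
    ∃ t₀ : ℝ, t₀ < 0 ∧ ∃ M : ℝ → Matrix (Fin d) (Fin d) ℝ,
      (∀ t ∈ Set.Iic t₀, HasDerivWithinAt M (-(M t * M t + Q t)) (Set.Iic t₀) t) ∧
      M t₀ = (1/t₀) • (1 : Matrix (Fin d) (Fin d) ℝ) ∧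
      (∀ t ∈ Set.Iic t₀, (M t).IsSymm) ∧
      (∃ C' : ℝ, ∀ t ∈ Set.Iic t₀,
        ‖M t - (1/t) • (1 : Matrix (Fin d) (Fin d) ℝ)‖ ≤ C' / t ^ 2) ∧
      (∀ N : ℝ → Matrix (Fin d) (Fin d) ℝ,
        (∀ t ∈ Set.Iic t₀, HasDerivWithinAt N (-(N t * N t + Q t)) (Set.Iic t₀) t) →
        N t₀ = (1/t₀) • (1 : Matrix (Fin d) (Fin d) ℝ) →
        ∀ t ∈ Set.Iic t₀, N t = M t) := by
  have hQint := integrable_norm_sq_smul_of_norm_le hμ hQc hQbound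
  obtain ⟨t₀, ht₀, S, hSc, hS_le, hSeq⟩ :=
    (Riccati.eventually_exists_integralMap_eq hQc hQint).exists
  have hM := Riccati.isSolutionOn_ofCorrection hQc ht₀ hSc hSeq
  have hM₀ : Riccati.ofCorrection S t₀ = (1 / t₀) • (1 : Matrix (Fin d) (Fin d) ℝ) := by
    rw [Riccati.ofCorrection, ← hSeq, Riccati.integralMap, min_self,
      intervalIntegral.integral_same, smul_zero, add_zero, one_div]
  refine ⟨t₀, ht₀, Riccati.ofCorrection S, hM, hM₀,
    hM.isSymm hQsym (hM₀ ▸ Matrix.isSymm_one.smul _), ⟨1, fun t _ => ?_⟩,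
    fun N hN hN₀ => Riccati.IsSolutionOn.eqOn hN hM (hN₀.trans hM₀.symm)⟩
  rw [one_div, Riccati.norm_ofCorrection_sub]
  gcongr
  exact hS_le t

/-- Existence, uniqueness and asymptotics for the matrix Riccati problem
`M' + M² + Q = 0`, `M t₀ = (1/t₀) • 1` on `(-∞, t₀]`, for a continuous symmetric
`Q` decaying like `(1+|t|)^{-μ-2}` with `μ > 1`. -/
theorem stmt_1 (d : ℕ) (hd : 1 ≤ d) (μ C : ℝ) (hμ : 1 < μ) (hC : 0 < C)
    (Q : ℝ → Matrix (Fin d) (Fin d) ℝ) (hQc : Continuous Q)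
    (hQsym : ∀ t, (Q t).IsSymm)
    (hQbound : ∀ t : ℝ, ‖Q t‖ ≤ C * (1 + |t|) ^ (-μ - 2)) :
    ∃ t₀ : ℝ, t₀ < 0 ∧ ∃ M : ℝ → Matrix (Fin d) (Fin d) ℝ,
      (∀ t ∈ Set.Iic t₀, HasDerivWithinAt M (-(M t * M t + Q t)) (Set.Iic t₀) t) ∧
      M t₀ = (1/t₀) • (1 : Matrix (Fin d) (Fin d) ℝ) ∧
      (∀ t ∈ Set.Iic t₀, (M t).IsSymm) ∧
      (∃ C' : ℝ, ∀ t ∈ Set.Iic t₀,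
        ‖M t - (1/t) • (1 : Matrix (Fin d) (Fin d) ℝ)‖ ≤ C' / t ^ 2) ∧
      (∀ N : ℝ → Matrix (Fin d) (Fin d) ℝ,
        (∀ t ∈ Set.Iic t₀, HasDerivWithinAt N (-(N t * N t + Q t)) (Set.Iic t₀) t) →
        N t₀ = (1/t₀) • (1 : Matrix (Fin d) (Fin d) ℝ) →
        ∀ t ∈ Set.Iic t₀, N t = M t) :=
  stmt_1_general d μ C hμ Q hQc hQsym hQbound
end

section
/- Let d ≥ 1, t₀ < 0, and let M : (−∞, t₀] → Matrix (Fin d) (Fin d) ℝ be continuous with ‖M(t) − (1/t)·I_d‖ ≤ C/t² for all t ≤ t₀ and some constant C > 0. Define h(t) = exp( (1/2) ∫_{t₀}^{t} tr M(s) ds ) for t ≤ t₀. Then there exists a constant c > 0 such that h(t)·|t|^{-d/2} → c as t → −∞. -/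
attribute [local instance] Matrix.normedAddCommGroup Matrix.normedSpace

/-!
Since `tr M(s) = d/s + O(1/s²)`, the term `d/s` integrates to `d log(t/t₀)`, so that
`exp((1/2) d log(t/t₀)) = (|t|/|t₀|)^{d/2}` cancels the weight `|t|^{-d/2}` exactly, while the
`O(1/s²)` remainder is integrable on `(-∞, t₀]`. Hence the product converges to
`exp(-(1/2) ∫_{-∞}^{t₀} (tr M(s) - d/s) ds) · |t₀|^{-d/2} > 0`.
-/

open MeasureTheory Filter Real Set Topology

theorem Matrix.norm_trace_le {n : Type*} [Fintype n] (A : Matrix n n ℝ) :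
    ‖A.trace‖ ≤ Fintype.card n * ‖A‖ :=
  calc ‖A.trace‖ ≤ ∑ i, ‖A i i‖ := norm_sum_le _ _
    _ ≤ ∑ _i : n, ‖A‖ := Finset.sum_le_sum fun i _ => A.norm_entry_le_entrywise_sup_norm
    _ = Fintype.card n * ‖A‖ := by simp

theorem integrableOn_Iic_inv_sq {a : ℝ} (ha : a < 0) :
    IntegrableOn (fun s : ℝ => (s ^ 2)⁻¹) (Iic a) := by
  have hIoi : IntegrableOn (fun s : ℝ => (s ^ 2)⁻¹) (Ioi (-a)) :=
    (integrableOn_Ioi_rpow_of_lt (by norm_num : (-2 : ℝ) < -1) (neg_pos.2 ha)).congr_fun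
      (fun s hs => by simp [rpow_neg ((neg_pos.2 ha).trans hs).le]) measurableSet_Ioi
  rw [← (Measure.measurePreserving_neg (volume : Measure ℝ)).integrableOn_comp_preimage
    (Homeomorph.neg ℝ).measurableEmbedding] at hIoi
  simpa [Function.comp_def, integrableOn_Iic_iff_integrableOn_Iio] using hIoi

theorem integrableOn_Iic_of_abs_le_div_sq {f : ℝ → ℝ} {a K : ℝ} (ha : a < 0)
    (hf : ContinuousOn f (Iic a)) (hfK : ∀ s ∈ Iic a, |f s| ≤ K / s ^ 2) :
    IntegrableOn f (Iic a) :=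
  ((integrableOn_Iic_inv_sq ha).const_mul K).mono' (hf.aestronglyMeasurable measurableSet_Iic)
    ((ae_restrict_iff' measurableSet_Iic).2 (ae_of_all _ fun s hs => by
      simpa [div_eq_mul_inv] using hfK s hs))

theorem exp_mul_integral_inv_of_neg {a t : ℝ} (ha : a < 0) (ht : t < 0) (p : ℝ) :
    exp (p * ∫ s in a..t, s⁻¹) = |t| ^ p * |a| ^ (-p) := by
  have hta : t / a = |t| / |a| := by rw [abs_of_neg ht, abs_of_neg ha, neg_div_neg_eq]
  rw [integral_inv_of_neg ha ht, mul_comm, ← rpow_def_of_pos (div_pos_of_neg_of_neg ht ha), hta,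
    div_rpow (abs_nonneg t) (abs_nonneg a), rpow_neg (abs_nonneg a), div_eq_mul_inv]

theorem tendsto_exp_integral_mul_abs_rpow_of_abs_sub_div_le {f : ℝ → ℝ} {a p K : ℝ} (ha : a < 0)
    (hf : ContinuousOn f (Iic a)) (hfK : ∀ s ∈ Iic a, |f s - p / s| ≤ K / s ^ 2) :
    ∃ c, 0 < c ∧ Tendsto (fun t => exp (∫ s in a..t, f s) * |t| ^ (-p)) atBot (𝓝 c) := by
  set g := fun s => f s - p / s
  have hg : ContinuousOn g (Iic a) :=
    hf.sub (continuousOn_const.div continuousOn_id fun s hs => (hs.trans_lt ha).ne)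
  have hgi : IntegrableOn g (Iic a) := integrableOn_Iic_of_abs_le_div_sq ha hg hfK
  refine ⟨exp (-∫ s in Iic a, g s) * |a| ^ (-p),
    mul_pos (exp_pos _) (rpow_pos_of_pos (abs_pos.2 ha.ne) _), ?_⟩
  have hlim : Tendsto (fun t => ∫ s in a..t, g s) atBot (𝓝 (-∫ s in Iic a, g s)) := by
    simpa [intervalIntegral.integral_symm a] using
      (intervalIntegral_tendsto_integral_Iic a hgi tendsto_id).neg
  refine (((continuous_exp.tendsto _).comp hlim).mul_const _).congr' ?_
  filter_upwards [eventually_lt_atBot a] with t hta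
  have ht : t < 0 := hta.trans ha
  have hgt : IntervalIntegrable g volume a t :=
    ((hg.mono Icc_subset_Iic_self).intervalIntegrable_of_Icc hta.le).symm
  have hinv : IntervalIntegrable (fun s : ℝ => p * s⁻¹) volume a t :=
    (intervalIntegrable_inv_iff.2 (Or.inr (notMem_uIcc_of_gt ha ht))).const_mul p
  have hsplit : ∫ s in a..t, f s = (∫ s in a..t, g s) + p * ∫ s in a..t, s⁻¹ := by
    rw [← intervalIntegral.integral_const_mul, ← intervalIntegral.integral_add hgt hinv]
    simp [g, div_eq_mul_inv]
  have hpow : |t| ^ p * |t| ^ (-p) = 1 := by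
    rw [rpow_neg (abs_nonneg t), mul_inv_cancel₀ (rpow_pos_of_pos (abs_pos.2 ht.ne) p).ne']
  simp only [Function.comp_apply]
  rw [hsplit, exp_add, exp_mul_integral_inv_of_neg ha ht]
  linear_combination (-(exp (∫ s in a..t, g s) * |a| ^ (-p))) * hpow

theorem stmt_2_general (d : ℕ) (t₀ C : ℝ) (ht₀ : t₀ < 0)
    (M : ℝ → Matrix (Fin d) (Fin d) ℝ)
    (hMc : ContinuousOn M (Set.Iic t₀))
    (hM : ∀ t ∈ Set.Iic t₀,
      ‖M t - (1/t) • (1 : Matrix (Fin d) (Fin d) ℝ)‖ ≤ C / t ^ 2) :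
    ∃ c : ℝ, 0 < c ∧
      Filter.Tendsto
        (fun t : ℝ =>
          Real.exp ((1/2) * ∫ s in t₀..t, (M s).trace) * |t| ^ (-(d : ℝ)/2))
        Filter.atBot (nhds c) := by
  have htr : ContinuousOn (fun s => (1/2) * (M s).trace) (Iic t₀) :=
    continuousOn_const.mul
      ((continuous_id (X := Matrix (Fin d) (Fin d) ℝ)).matrix_trace.comp_continuousOn hMc)
  have hbound : ∀ s ∈ Iic t₀, |(1/2) * (M s).trace - (d/2) / s| ≤ (d * C / 2) / s ^ 2 := by
    intro s hs
    have htrace : (1/2) * (M s).trace - (d/2) / s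
        = (1/2) * (M s - (1/s) • (1 : Matrix (Fin d) (Fin d) ℝ)).trace := by
      rw [Matrix.trace_sub, Matrix.trace_smul, Matrix.trace_one, Fintype.card_fin]
      simp only [smul_eq_mul]
      ring
    calc |(1/2) * (M s).trace - (d/2) / s|
        ≤ (1/2) * (d * ‖M s - (1/s) • (1 : Matrix (Fin d) (Fin d) ℝ)‖) := by
          rw [htrace, abs_mul, abs_of_pos one_half_pos, ← Real.norm_eq_abs]
          gcongr
          simpa using Matrix.norm_trace_le (M s - (1/s) • (1 : Matrix (Fin d) (Fin d) ℝ))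
      _ ≤ (1/2) * (d * (C / s ^ 2)) := by gcongr; exact hM s hs
      _ = (d * C / 2) / s ^ 2 := by ring
  obtain ⟨c, hc, hlim⟩ := tendsto_exp_integral_mul_abs_rpow_of_abs_sub_div_le ht₀ htr hbound
  refine ⟨c, hc, hlim.congr fun t => ?_⟩
  rw [intervalIntegral.integral_const_mul, neg_div]

/-- Asymptotics of the dispersion factor `h(t) = exp((1/2)∫_{t₀}^t tr M(s) ds)` in
Mehler's formula: if `M(t) = (1/t)·I + O(1/t²)` on `(-∞, t₀]`, then
`h(t)·|t|^{-d/2}` converges to some `c > 0` as `t → -∞`. -/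
theorem stmt_2 (d : ℕ) (hd : 1 ≤ d) (t₀ C : ℝ) (ht₀ : t₀ < 0) (hC : 0 < C)
    (M : ℝ → Matrix (Fin d) (Fin d) ℝ)
    (hMc : ContinuousOn M (Set.Iic t₀))
    (hM : ∀ t ∈ Set.Iic t₀,
      ‖M t - (1/t) • (1 : Matrix (Fin d) (Fin d) ℝ)‖ ≤ C / t ^ 2) :
    ∃ c : ℝ, 0 < c ∧
      Filter.Tendsto
        (fun t : ℝ =>
          Real.exp ((1/2) * ∫ s in t₀..t, (M s).trace) * |t| ^ (-(d : ℝ)/2))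
        Filter.atBot (nhds c) :=
  stmt_2_general d t₀ C ht₀ M hMc hM
end

section
/- Let s > 1/2. There exists a constant C = C(s) such that for every measurable f : ℝ³ → ℂ with f ∈ L²(ℝ³) and x ↦ |x|^s f(x) ∈ L²(ℝ³), one has f ∈ L^{3/2}(ℝ³) with ‖f‖_{L^{3/2}(ℝ³)} ≤ C ‖f‖_{L²(ℝ³)}^{1 − 1/(2s)} · ‖ |x|^s f ‖_{L²(ℝ³)}^{1/(2s)}. -/
/-!
Split `f` over the ball `B_R` and its complement. On `B_R`, Hölder's inequality on a set of
finite measure gives `‖f‖_{3/2} ≤ |B_R|^{1/6} ‖f‖₂ ∼ R^{1/2} ‖f‖₂`. Off `B_R`, write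
`f = |x|^{-s} · |x|^s f` and use Hölder with `2/3 = 1/6 + 1/2`; by scaling,
`‖1_{|x|≥R} |x|^{-s}‖₆ = R^{1/2-s} ‖1_{|x|≥1} |x|^{-s}‖₆`, which is finite because `6s > 3`.
Choosing `R^s = ‖|x|^s f‖₂ / ‖f‖₂` balances the two terms.
-/

open MeasureTheory Metric Set Module
open scoped ENNReal

section Split

variable {α F : Type*} [MeasurableSpace α] {μ : Measure α} [NormedAddCommGroup F] [NormedSpace ℝ F]

theorem eLpNorm_le_split_weighted {p q r : ℝ≥0∞} [q.HolderTriple r p] (hp : 1 ≤ p)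
    {S : Set α} (hS : MeasurableSet S) {f : α → F} (hf : AEStronglyMeasurable f μ)
    {w : α → ℝ} (hw : Measurable w) (hw0 : ∀ x ∉ S, w x ≠ 0) :
    eLpNorm f p μ ≤ eLpNorm f r μ * μ S ^ (1 / p.toReal - 1 / r.toReal) +
      eLpNorm (Sᶜ.indicator w⁻¹) q μ * eLpNorm (w • f) r μ := by
  have houter : Sᶜ.indicator f = Sᶜ.indicator w⁻¹ • (w • f) := by
    ext x
    by_cases hx : x ∈ S <;> simp [hx, hw0]
  calc eLpNorm f p μ = eLpNorm (S.indicator f + Sᶜ.indicator f) p μ := by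
        rw [indicator_self_add_compl]
    _ ≤ eLpNorm (S.indicator f) p μ + eLpNorm (Sᶜ.indicator f) p μ :=
        eLpNorm_add_le (hf.indicator hS) (hf.indicator hS.compl) hp
    _ ≤ _ := by
      gcongr
      · rw [eLpNorm_indicator_eq_eLpNorm_restrict hS]
        calc _ ≤ eLpNorm f r (μ.restrict S) * μ.restrict S univ ^ (1 / p.toReal - 1 / r.toReal) :=
              eLpNorm_le_eLpNorm_mul_rpow_measure_univ (ENNReal.HolderTriple.le r q p) hf.restrict
          _ ≤ _ := by
              rw [Measure.restrict_apply_univ]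
              gcongr
              exact Measure.restrict_le_self
      · rw [houter]
        exact eLpNorm_smul_le_mul_eLpNorm (hw.aestronglyMeasurable.smul hf)
          (hw.inv.indicator hS.compl).aestronglyMeasurable

end Split

theorem ENNReal.HolderTriple.one_div_toReal_sub {p q r : ℝ≥0∞} [q.HolderTriple r p] (hp : p ≠ 0) :
    1 / p.toReal - 1 / r.toReal = 1 / q.toReal := by
  have hinv := ENNReal.HolderTriple.inv_eq q r p
  have hfin : p⁻¹ ≠ ⊤ := ENNReal.inv_ne_top.2 hp
  rw [hinv, ENNReal.add_ne_top] at hfin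
  simp only [one_div, ← ENNReal.toReal_inv, hinv, ENNReal.toReal_add hfin.1 hfin.2]
  ring

theorem le_of_forall_le_rpow_add_rpow {X a b c₁ c₂ θ s : ℝ} (hs : s ≠ 0) (ha : 0 < a) (hb : 0 < b)
    (h : ∀ R > 0, X ≤ R ^ θ * c₁ * a + R ^ (θ - s) * c₂ * b) :
    X ≤ (c₁ + c₂) * a ^ (1 - θ / s) * b ^ (θ / s) := by
  set R := (b / a) ^ s⁻¹
  have hpow (t : ℝ) : R ^ t = b ^ (t / s) * a ^ (-(t / s)) := by
    rw [← Real.rpow_mul (div_pos hb ha).le, Real.div_rpow hb.le ha.le, Real.rpow_neg ha.le]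
    ring_nf
  have h₁ : R ^ θ * a = a ^ (1 - θ / s) * b ^ (θ / s) := by
    rw [hpow, Real.rpow_sub ha, Real.rpow_one, Real.rpow_neg ha.le]
    field_simp
  have h₂ : R ^ (θ - s) * b = a ^ (1 - θ / s) * b ^ (θ / s) := by
    rw [hpow, sub_div, div_self hs, Real.rpow_sub hb, Real.rpow_one, Real.rpow_neg ha.le,
      Real.rpow_sub ha, Real.rpow_sub ha, Real.rpow_one]
    field_simp
  calc X ≤ R ^ θ * c₁ * a + R ^ (θ - s) * c₂ * b := h R (by positivity)
    _ = (c₁ + c₂) * a ^ (1 - θ / s) * b ^ (θ / s) := by linear_combination c₁ * h₁ + c₂ * h₂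

theorem ae_eq_zero_of_norm_rpow_smul_ae_eq_zero {E F : Type*} [NormedAddCommGroup E]
    [MeasurableSpace E] [NormedAddCommGroup F] [NormedSpace ℝ F] {μ : Measure E}
    [NullSingletonClass μ] {s : ℝ} {f : E → F} (h : (fun x => ‖x‖ ^ s • f x) =ᵐ[μ] 0) :
    f =ᵐ[μ] 0 := by
  filter_upwards [h, Measure.ae_ne μ 0] with x hx hx0
  exact (smul_eq_zero.1 hx).resolve_left (Real.rpow_pos_of_pos (norm_pos_iff.2 hx0) s).ne'

section Haar

variable {E F : Type*} [NormedAddCommGroup E] [NormedSpace ℝ E] [NormedAddCommGroup F]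

theorem indicator_compl_ball_norm_rpow_neg_eq {R : ℝ} (hR : 0 < R) (s : ℝ) (x : E) :
    (ball (0 : E) R)ᶜ.indicator (fun y => ‖y‖ ^ (-s)) x =
      R ^ (-s) * (ball (0 : E) 1)ᶜ.indicator (fun y => ‖y‖ ^ (-s)) (R⁻¹ • x) := by
  have hmem : R⁻¹ • x ∈ (ball (0 : E) 1)ᶜ ↔ x ∈ (ball (0 : E) R)ᶜ := by
    simp only [mem_compl_iff, mem_ball_zero_iff, not_lt, norm_smul, norm_inv, Real.norm_eq_abs,
      abs_of_pos hR, inv_mul_eq_div, one_le_div hR]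
  by_cases hx : x ∈ (ball (0 : E) R)ᶜ
  · rw [indicator_of_mem hx, indicator_of_mem (hmem.2 hx), norm_smul, norm_inv, Real.norm_eq_abs,
      abs_of_pos hR, Real.mul_rpow (by positivity) (norm_nonneg x), Real.inv_rpow hR.le,
      Real.rpow_neg hR.le, mul_inv_cancel_left₀ (by positivity)]
  · rw [indicator_of_notMem hx, indicator_of_notMem (mt hmem.1 hx), mul_zero]

variable [FiniteDimensional ℝ E] [MeasurableSpace E] [BorelSpace E] (μ : Measure E)
  [μ.IsAddHaarMeasure]

theorem eLpNorm_comp_smul_of_pos {g : E → F} (hg : AEStronglyMeasurable g μ) {R : ℝ} (hR : 0 < R)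
    (p : ℝ≥0∞) :
    eLpNorm (fun x => g (R • x)) p μ =
      ENNReal.ofReal (R ^ finrank ℝ E)⁻¹ ^ (1 / p).toReal * eLpNorm g p μ := by
  have hmap := Measure.map_addHaar_smul μ hR.ne'
  rw [abs_of_pos (by positivity)] at hmap
  have hc : ENNReal.ofReal (R ^ finrank ℝ E)⁻¹ ≠ 0 := by
    rw [Ne, ENNReal.ofReal_eq_zero, not_le]
    positivity
  have hg' : AEStronglyMeasurable g (Measure.map (R • ·) μ) := hmap ▸ hg.smul_measure _
  rw [← Function.comp_def, ← eLpNorm_map_measure hg' (measurable_const_smul R).aemeasurable, hmap,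
    eLpNorm_smul_measure_of_ne_zero hc, smul_eq_mul]

theorem eLpNorm_indicator_compl_ball_norm_rpow_neg {R : ℝ} (hR : 0 < R) (s : ℝ) (q : ℝ≥0∞) :
    eLpNorm ((ball (0 : E) R)ᶜ.indicator fun x => ‖x‖ ^ (-s)) q μ =
      ENNReal.ofReal (R ^ (finrank ℝ E / q.toReal - s)) *
        eLpNorm ((ball (0 : E) 1)ᶜ.indicator fun x => ‖x‖ ^ (-s)) q μ := by
  have hmeas : Measurable ((ball (0 : E) 1)ᶜ.indicator fun x => ‖x‖ ^ (-s)) :=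
    (measurable_norm.pow_const _).indicator measurableSet_ball.compl
  have hscale : ((ball (0 : E) R)ᶜ.indicator fun x => ‖x‖ ^ (-s)) =
      R ^ (-s) • fun x => (ball (0 : E) 1)ᶜ.indicator (fun y => ‖y‖ ^ (-s)) (R⁻¹ • x) :=
    funext (indicator_compl_ball_norm_rpow_neg_eq hR s)
  rw [hscale, eLpNorm_const_smul,
    eLpNorm_comp_smul_of_pos μ hmeas.aestronglyMeasurable (inv_pos.2 hR),
    ← mul_assoc, Real.enorm_eq_ofReal (by positivity), inv_pow, inv_inv,
    ENNReal.ofReal_rpow_of_nonneg (by positivity) ENNReal.toReal_nonneg, ← ENNReal.ofReal_mul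
      (by positivity), ← Real.rpow_natCast, ← Real.rpow_mul hR.le, ← Real.rpow_add hR,
    one_div, ENNReal.toReal_inv]
  ring_nf

theorem integrableOn_compl_ball_norm_rpow_neg {r : ℝ} (hr : finrank ℝ E < r) :
    IntegrableOn (fun x : E => ‖x‖ ^ (-r)) (ball 0 1)ᶜ μ := by
  have hr0 : 0 ≤ r := (Nat.cast_nonneg _).trans hr.le
  refine ((integrable_one_add_norm hr).const_mul (2 ^ r)).integrableOn.mono'
    (measurable_norm.pow_const _).aestronglyMeasurable
    (ae_restrict_of_forall_mem measurableSet_ball.compl fun x hx => ?_)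
  rw [mem_compl_iff, mem_ball_zero_iff, not_lt] at hx
  calc ‖‖x‖ ^ (-r)‖ = ‖x‖ ^ (-r) := Real.norm_of_nonneg (by positivity)
    _ ≤ ((1 + ‖x‖) / 2) ^ (-r) :=
        Real.rpow_le_rpow_of_nonpos (by positivity) (by linarith) (neg_nonpos.2 hr0)
    _ = 2 ^ r * (1 + ‖x‖) ^ (-r) := by
        rw [Real.div_rpow (by positivity) zero_le_two, Real.rpow_neg zero_le_two, div_inv_eq_mul,
          mul_comm]

theorem memLp_indicator_compl_ball_norm_rpow_neg {s : ℝ} {q : ℝ≥0∞}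
    (hsq : finrank ℝ E < s * q.toReal) :
    MemLp ((ball (0 : E) 1)ᶜ.indicator fun x => ‖x‖ ^ (-s)) q μ := by
  have hq : q.toReal ≠ 0 := fun h => by
    rw [h, mul_zero] at hsq
    exact (Nat.cast_nonneg _).not_gt hsq
  obtain ⟨hq0, hqtop⟩ := ENNReal.toReal_ne_zero.1 hq
  have hmeas : Measurable ((ball (0 : E) 1)ᶜ.indicator fun x => ‖x‖ ^ (-s)) :=
    (measurable_norm.pow_const _).indicator measurableSet_ball.compl
  refine (integrable_norm_rpow_iff hmeas.aestronglyMeasurable hq0 hqtop).1 ?_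
  have hpow : (fun x => ‖(ball (0 : E) 1)ᶜ.indicator (fun x => ‖x‖ ^ (-s)) x‖ ^ q.toReal) =
      (ball (0 : E) 1)ᶜ.indicator fun x => ‖x‖ ^ (-(s * q.toReal)) := by
    ext x
    by_cases hx : x ∈ (ball (0 : E) 1)ᶜ
    · rw [indicator_of_mem hx, indicator_of_mem hx, Real.norm_of_nonneg (by positivity),
        ← Real.rpow_mul (norm_nonneg x), neg_mul]
    · rw [indicator_of_notMem hx, indicator_of_notMem hx, norm_zero, Real.zero_rpow hq]
  rw [hpow, integrable_indicator_iff measurableSet_ball.compl]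
  exact integrableOn_compl_ball_norm_rpow_neg μ hsq

theorem eLpNorm_le_rpow_mul_add_rpow_mul [NormedSpace ℝ F] [Nontrivial E] {p q : ℝ≥0∞}
    [q.HolderTriple 2 p] (hp : 1 ≤ p) (s : ℝ) {f : E → F} (hf : AEStronglyMeasurable f μ)
    {R : ℝ} (hR : 0 < R) :
    eLpNorm f p μ ≤
      ENNReal.ofReal (R ^ (finrank ℝ E / q.toReal)) * μ (ball 0 1) ^ (1 / q.toReal) *
          eLpNorm f 2 μ +
        ENNReal.ofReal (R ^ (finrank ℝ E / q.toReal - s)) *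
          eLpNorm ((ball (0 : E) 1)ᶜ.indicator fun x => ‖x‖ ^ (-s)) q μ *
          eLpNorm (fun x => ‖x‖ ^ s • f x) 2 μ := by
  have hw0 (x : E) (hx : x ∉ ball 0 R) : ‖x‖ ^ s ≠ 0 := by
    rw [mem_ball_zero_iff, not_lt] at hx
    exact (Real.rpow_pos_of_pos (hR.trans_le hx) s).ne'
  have hinv : (fun x : E => ‖x‖ ^ s)⁻¹ = fun x => ‖x‖ ^ (-s) :=
    funext fun x => (Real.rpow_neg (norm_nonneg x) s).symm
  have hsplit := eLpNorm_le_split_weighted (μ := μ) (q := q) (r := 2) hp measurableSet_ball hf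
    (measurable_norm.pow_const s) hw0
  rw [ENNReal.HolderTriple.one_div_toReal_sub (q := q) (r := 2) (zero_lt_one.trans_le hp).ne', hinv,
    eLpNorm_indicator_compl_ball_norm_rpow_neg μ hR, Measure.addHaar_ball μ 0 hR.le,
    ENNReal.mul_rpow_of_nonneg _ _ (by positivity), ENNReal.ofReal_rpow_of_nonneg (by positivity)
      (by positivity), ← Real.rpow_natCast, ← Real.rpow_mul hR.le, mul_one_div,
    mul_comm (eLpNorm f 2 μ)] at hsplit
  exact hsplit

theorem exists_eLpNorm_le_mul_rpow_mul_rpow [NormedSpace ℝ F] [Nontrivial E] {p q : ℝ≥0∞}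
    [q.HolderTriple 2 p] (hp : 1 ≤ p) {s : ℝ} (hs : finrank ℝ E < s * q.toReal) :
    ∃ C : ℝ, ∀ f : E → F, MemLp f 2 μ → MemLp (fun x => ‖x‖ ^ s • f x) 2 μ →
      MemLp f p μ ∧ (eLpNorm f p μ).toReal ≤
        C * (eLpNorm f 2 μ).toReal ^ (1 - finrank ℝ E / q.toReal / s) *
          (eLpNorm (fun x => ‖x‖ ^ s • f x) 2 μ).toReal ^ (finrank ℝ E / q.toReal / s) := by
  have hsq : 0 < s * q.toReal := (Nat.cast_nonneg _).trans_lt hs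
  have hs0 : 0 < s := pos_of_mul_pos_left hsq ENNReal.toReal_nonneg
  set φ := (ball (0 : E) 1)ᶜ.indicator fun x => ‖x‖ ^ (-s)
  set c₁ := μ (ball (0 : E) 1) ^ (1 / q.toReal)
  have hc₁ : c₁ ≠ ⊤ := ENNReal.rpow_ne_top_of_nonneg (by positivity) measure_ball_lt_top.ne
  have hc₂ : eLpNorm φ q μ ≠ ⊤ := (memLp_indicator_compl_ball_norm_rpow_neg μ hs).eLpNorm_ne_top
  refine ⟨c₁.toReal + (eLpNorm φ q μ).toReal, fun f hf hg => ?_⟩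
  have key (R : ℝ) (hR : 0 < R) : eLpNorm f p μ ≤ ENNReal.ofReal
      (R ^ (finrank ℝ E / q.toReal) * c₁.toReal * (eLpNorm f 2 μ).toReal +
        R ^ (finrank ℝ E / q.toReal - s) * (eLpNorm φ q μ).toReal *
          (eLpNorm (fun x => ‖x‖ ^ s • f x) 2 μ).toReal) := by
    refine (eLpNorm_le_rpow_mul_add_rpow_mul μ (q := q) hp s hf.1 hR).trans_eq ?_
    rw [ENNReal.ofReal_add (by positivity) (by positivity), ENNReal.ofReal_mul (by positivity),
      ENNReal.ofReal_mul (by positivity), ENNReal.ofReal_mul (by positivity),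
      ENNReal.ofReal_mul (by positivity), ENNReal.ofReal_toReal hc₁, ENNReal.ofReal_toReal hc₂,
      ENNReal.ofReal_toReal hf.eLpNorm_ne_top, ENNReal.ofReal_toReal hg.eLpNorm_ne_top]
  refine ⟨⟨hf.1, (key 1 one_pos).trans_lt ENNReal.ofReal_lt_top⟩, ?_⟩
  by_cases hf0 : f =ᵐ[μ] 0
  · rw [eLpNorm_congr_ae hf0, eLpNorm_zero, ENNReal.toReal_zero]
    positivity
  have ha : 0 < (eLpNorm f 2 μ).toReal := ENNReal.toReal_pos
    (mt (eLpNorm_eq_zero_iff hf.1 two_ne_zero).1 hf0) hf.eLpNorm_ne_top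
  have hb : 0 < (eLpNorm (fun x => ‖x‖ ^ s • f x) 2 μ).toReal := ENNReal.toReal_pos
    (fun h => hf0 (ae_eq_zero_of_norm_rpow_smul_ae_eq_zero
      ((eLpNorm_eq_zero_iff hg.1 two_ne_zero).1 h))) hg.eLpNorm_ne_top
  exact le_of_forall_le_rpow_add_rpow hs0.ne' ha hb
    fun R hR => ENNReal.toReal_le_of_le_ofReal (by positivity) (key R hR)

end Haar

/-- Weighted interpolation inequality in ℝ³: for `s > 1/2`,
`‖f‖_{L^{3/2}} ≤ C ‖f‖_{L²}^{1-1/(2s)} ‖ |x|^s f ‖_{L²}^{1/(2s)}`. -/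
theorem stmt_3 (s : ℝ) (hs : 1/2 < s) :
    ∃ C : ℝ, ∀ f : EuclideanSpace ℝ (Fin 3) → ℂ,
      MemLp f 2 volume →
      MemLp (fun x => (‖x‖ ^ s : ℝ) • f x) 2 volume →
      MemLp f (ENNReal.ofReal (3/2)) volume ∧
      (eLpNorm f (ENNReal.ofReal (3/2)) volume).toReal ≤
        C * (eLpNorm f 2 volume).toReal ^ (1 - 1/(2*s)) *
          (eLpNorm (fun x => (‖x‖ ^ s : ℝ) • f x) 2 volume).toReal ^ (1/(2*s)) := by
  have : (6 : ℝ≥0∞).HolderTriple 2 (ENNReal.ofReal (3 / 2)) := ⟨by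
    rw [← ENNReal.ofReal_ofNat 6, ← ENNReal.ofReal_ofNat 2,
      ← ENNReal.ofReal_inv_of_pos (by norm_num), ← ENNReal.ofReal_inv_of_pos (by norm_num),
      ← ENNReal.ofReal_inv_of_pos (by norm_num), ← ENNReal.ofReal_add (by norm_num) (by norm_num)]
    norm_num⟩
  obtain ⟨C, hC⟩ := exists_eLpNorm_le_mul_rpow_mul_rpow (F := ℂ)
    (volume : Measure (EuclideanSpace ℝ (Fin 3))) (p := ENNReal.ofReal (3 / 2)) (q := 6)
    (by norm_num) (s := s) (by rw [finrank_euclideanSpace_fin]; norm_num; linarith)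
  refine ⟨C, fun f hf hg => ?_⟩
  convert hC f hf hg using 4 <;>
  · rw [finrank_euclideanSpace_fin]
    norm_num
    field_simp
end

section
/- Let μ > 2. There exists a constant M = M(μ) > 0 with the following property: for every V ∈ C^∞(ℝ³; ℝ) whose attractive radial part satisfies ((x/|x|)·∇V(x))₊ ≤ M (1+|x|)^{-μ-1} for all x ≠ 0 (where f₊ = max(0,f)), there exist η > 0, c₀ > 0, and a function h̃ ∈ C⁴([0,∞)) with h̃' ≥ 0, h̃'' ≥ 0 and h̃' bounded, such that the radial function h(x) = h̃(|x|) satisfies, for every x ∈ ℝ³ \ {0}: (i) the Hessian matrix ∇²h(x) is positive semidefinite; (ii) Δh(x) ≥ η/|x|; (iii) (1/4) Δ²h(x) + ∇V(x)·∇h(x) ≤ −c₀ (1+|x|)^{-μ-1}. -/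
/-- The Laplacian of `f : ℝ³ → ℝ` at `x`, as the trace of the second derivative
in the coordinate directions. -/
noncomputable def lap3 (f : EuclideanSpace ℝ (Fin 3) → ℝ) (x : EuclideanSpace ℝ (Fin 3)) : ℝ :=
  ∑ i : Fin 3,
    iteratedFDeriv ℝ 2 f x ![EuclideanSpace.single i 1, EuclideanSpace.single i 1]

section MorawetzAux

local notation "E3" => EuclideanSpace ℝ (Fin 3)

private lemma norm_hasFDerivAt' {x : E3} (hx : x ≠ 0) :
    HasFDerivAt (fun y : E3 => ‖y‖) ((‖x‖⁻¹ : ℝ) • innerSL ℝ x) x := by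
  have hx' : (0:ℝ) < ‖x‖ := norm_pos_iff.2 hx
  have h2 : HasFDerivAt (fun y : E3 => ‖y‖^2) (2 • innerSL ℝ x) x :=
    (hasStrictFDerivAt_norm_sq x).hasFDerivAt
  have hs : HasDerivAt Real.sqrt (1 / (2 * Real.sqrt (‖x‖^2))) (‖x‖^2) :=
    Real.hasDerivAt_sqrt (by positivity)
  have h := hs.comp_hasFDerivAt x h2
  have hfun : (Real.sqrt ∘ fun y : E3 => ‖y‖^2) = fun y : E3 => ‖y‖ := by
    funext y; simp [Function.comp, Real.sqrt_sq (norm_nonneg y)]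
  rw [hfun] at h
  refine h.congr_fderiv ?_
  ext y
  simp [Real.sqrt_sq (norm_nonneg x)]
  field_simp

private lemma radial_hasFDerivAt' {g : ℝ → ℝ} {a : ℝ} {x : E3} (hx : x ≠ 0)
    (hg : HasDerivAt g a ‖x‖) :
    HasFDerivAt (fun y : E3 => g ‖y‖) ((a * ‖x‖⁻¹) • innerSL ℝ x) x := by
  have h := hg.comp_hasFDerivAt x (norm_hasFDerivAt' hx)
  rwa [smul_smul] at h

private lemma radial_fderiv' {g : ℝ → ℝ} {a : ℝ} {x : E3} (hx : x ≠ 0)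
    (hg : HasDerivAt g a ‖x‖) :
    fderiv ℝ (fun y : E3 => g ‖y‖) x = (a * ‖x‖⁻¹) • innerSL ℝ x :=
  (radial_hasFDerivAt' hx hg).fderiv

private lemma radial_gradient' {g g1 : ℝ → ℝ} {x : E3} (hx : x ≠ 0)
    (hg : HasDerivAt g (g1 ‖x‖) ‖x‖) :
    gradient (fun y : E3 => g ‖y‖) x = (g1 ‖x‖ * ‖x‖⁻¹) • x := by
  apply HasGradientAt.gradient
  rw [hasGradientAt_iff_hasFDerivAt]
  refine (radial_hasFDerivAt' hx hg).congr_fderiv ?_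
  ext y
  simp [InnerProductSpace.toDual_apply_apply, real_inner_smul_left]

/-- Hessian of a radial function at `x ≠ 0`. -/
private lemma radial_hessian' {g g1 g2 : ℝ → ℝ} {x : E3} (hx : x ≠ 0)
    (hd1 : ∀ s : ℝ, 0 < s → HasDerivAt g (g1 s) s)
    (hd2 : HasDerivAt g1 (g2 ‖x‖) ‖x‖) (v w : E3) :
    iteratedFDeriv ℝ 2 (fun y : E3 => g ‖y‖) x ![v, w]
      = (g1 ‖x‖ / ‖x‖) * (inner ℝ v w : ℝ)
        + (g2 ‖x‖ / ‖x‖^2 - g1 ‖x‖ / ‖x‖^3) * ((inner ℝ x v : ℝ) * (inner ℝ x w : ℝ)) := by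
  have hr : (0:ℝ) < ‖x‖ := norm_pos_iff.2 hx
  set J : E3 →L[ℝ] E3 →L[ℝ] ℝ := innerSL ℝ with hJ
  set c : E3 → ℝ := fun y => g1 ‖y‖ * ‖y‖⁻¹ with hc
  set Ψ : E3 → (E3 →L[ℝ] ℝ) := fun y => c y • J y with hΨ
  have hev : fderiv ℝ (fun y : E3 => g ‖y‖) =ᶠ[nhds x] Ψ := by
    filter_upwards [IsOpen.mem_nhds isOpen_compl_singleton hx] with y hy
    have hy' : y ≠ 0 := hy
    exact radial_fderiv' hy' (hd1 ‖y‖ (norm_pos_iff.2 hy'))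
  rw [iteratedFDeriv_two_apply, hev.fderiv_eq]
  have hcd : HasFDerivAt c (((g2 ‖x‖ * ‖x‖⁻¹ - g1 ‖x‖ * (‖x‖^2)⁻¹) * ‖x‖⁻¹) • J x) x := by
    have h1 : HasDerivAt (fun s : ℝ => g1 s * s⁻¹)
        (g2 ‖x‖ * ‖x‖⁻¹ - g1 ‖x‖ * (‖x‖^2)⁻¹) ‖x‖ := by
      have := hd2.mul (hasDerivAt_inv hr.ne')
      refine this.congr_deriv ?_
      field_simp
      ring
    exact radial_hasFDerivAt' hx h1
  have hΨd : HasFDerivAt Ψ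
      (c x • J
        + (((g2 ‖x‖ * ‖x‖⁻¹ - g1 ‖x‖ * (‖x‖^2)⁻¹) * ‖x‖⁻¹) • J x).smulRight (J x)) x :=
    hcd.smul J.hasFDerivAt
  rw [hΨd.fderiv]
  simp only [Matrix.cons_val_zero, Matrix.cons_val_one, Matrix.head_cons,
    ContinuousLinearMap.add_apply, ContinuousLinearMap.smul_apply,
    ContinuousLinearMap.smulRight_apply, hJ, hc, smul_eq_mul]
  have e1 : ∀ a b : E3, (innerSL ℝ) a b = (inner ℝ a b : ℝ) := fun a b => rfl
  rw [e1, e1, e1]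
  field_simp

private lemma radial_lap3' {g g1 g2 : ℝ → ℝ} {x : E3} (hx : x ≠ 0)
    (hd1 : ∀ s : ℝ, 0 < s → HasDerivAt g (g1 s) s)
    (hd2 : HasDerivAt g1 (g2 ‖x‖) ‖x‖) :
    lap3 (fun y : E3 => g ‖y‖) x = g2 ‖x‖ + 2 * g1 ‖x‖ / ‖x‖ := by
  have hr : (0:ℝ) < ‖x‖ := norm_pos_iff.2 hx
  unfold lap3
  rw [Finset.sum_congr rfl (fun i _ => radial_hessian' hx hd1 hd2 _ _)]
  have h1 : ∀ i : Fin 3,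
      (inner ℝ (EuclideanSpace.single i (1:ℝ)) (EuclideanSpace.single i (1:ℝ)) : ℝ) = 1 := by
    intro i; simp [EuclideanSpace.inner_single_right]
  have h2 : ∀ i : Fin 3, (inner ℝ x (EuclideanSpace.single i (1:ℝ)) : ℝ) = x i := by
    intro i; simp [EuclideanSpace.inner_single_right]
  have hsum : ∑ i : Fin 3, (x i) * (x i) = ‖x‖^2 := by
    rw [← real_inner_self_eq_norm_sq]
    simp only [PiLp.inner_apply, RCLike.inner_apply, conj_trivial]
  simp only [h1, h2, mul_one]
  rw [Finset.sum_add_distrib, ← Finset.mul_sum, hsum]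
  simp only [Finset.sum_const, Finset.card_univ, Fintype.card_fin, nsmul_eq_mul]
  field_simp
  ring

private lemma lap3_congr' {f f' : E3 → ℝ} {x : E3} (h : f =ᶠ[nhds x] f') :
    lap3 f x = lap3 f' x := by
  unfold lap3
  refine Finset.sum_congr rfl fun i _ => ?_
  rw [iteratedFDeriv_two_apply, iteratedFDeriv_two_apply, (h.fderiv (𝕜 := ℝ)).fderiv_eq]

/-! ### The concrete radial profile -/

private noncomputable def Gf (p r : ℝ) : ℝ := 2*r + (1 - (1+r)^p)/p
private noncomputable def Gf1 (p r : ℝ) : ℝ := 2 - (1+r)^(p-1)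
private noncomputable def Gf2 (p r : ℝ) : ℝ := (1-p)*(1+r)^(p-2)
private noncomputable def Gf3 (p r : ℝ) : ℝ := (1-p)*(p-2)*(1+r)^(p-3)
private noncomputable def Gf4 (p r : ℝ) : ℝ := (1-p)*(p-2)*(p-3)*(1+r)^(p-4)
private noncomputable def Uf (p r : ℝ) : ℝ := Gf2 p r + 2*(Gf1 p r)/r
private noncomputable def Uf1 (p r : ℝ) : ℝ :=
  Gf3 p r + 2*(Gf2 p r)/r - 2*(Gf1 p r)/r^2
private noncomputable def Uf2 (p r : ℝ) : ℝ :=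
  Gf4 p r + 2*(Gf3 p r)/r - 4*(Gf2 p r)/r^2 + 4*(Gf1 p r)/r^3

private lemma hasDerivAt_rpow1p (q : ℝ) {r : ℝ} (h : -1 < r) :
    HasDerivAt (fun s : ℝ => (1+s)^q) (q * (1+r)^(q-1)) r := by
  have h0 : (1:ℝ)+r ≠ 0 := by linarith
  have := (Real.hasDerivAt_rpow_const (x := 1+r) (p := q) (Or.inl h0)).comp r
    ((hasDerivAt_id r).const_add 1)
  simpa [Function.comp_def] using this

private lemma hasDerivAt_Gf {p r : ℝ} (hp : 0 < p) (h : -1 < r) :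
    HasDerivAt (Gf p) (Gf1 p r) r := by
  have h1 := (((hasDerivAt_rpow1p p h).const_sub 1).div_const p)
  have h2 := ((hasDerivAt_id r).const_mul (2:ℝ)).add h1
  refine h2.congr_deriv ?_
  unfold Gf1; field_simp; ring

private lemma hasDerivAt_Gf1 {p r : ℝ} (h : -1 < r) :
    HasDerivAt (Gf1 p) (Gf2 p r) r := by
  have h1 := (hasDerivAt_rpow1p (p-1) h).const_sub 2
  refine h1.congr_deriv ?_
  unfold Gf2
  rw [show p-1-1 = p-2 by ring]
  ring

private lemma hasDerivAt_Gf2 {p r : ℝ} (h : -1 < r) :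
    HasDerivAt (Gf2 p) (Gf3 p r) r := by
  have h1 := (hasDerivAt_rpow1p (p-2) h).const_mul (1-p)
  refine h1.congr_deriv ?_
  unfold Gf3
  rw [show p-2-1 = p-3 by ring]
  ring

private lemma hasDerivAt_Gf3 {p r : ℝ} (h : -1 < r) :
    HasDerivAt (Gf3 p) (Gf4 p r) r := by
  have h1 := (hasDerivAt_rpow1p (p-3) h).const_mul ((1-p)*(p-2))
  refine h1.congr_deriv ?_
  unfold Gf4
  rw [show p-3-1 = p-4 by ring]
  ring

private lemma hasDerivAt_Uf {p r : ℝ} (hr : 0 < r) :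
    HasDerivAt (Uf p) (Uf1 p r) r := by
  have h : (-1:ℝ) < r := by linarith
  have h1 := (hasDerivAt_Gf1 (p := p) h).mul (hasDerivAt_inv hr.ne')
  have h2 := (hasDerivAt_Gf2 (p := p) h).add (h1.const_mul (2:ℝ))
  refine (h2.congr_deriv ?_).congr_of_eventuallyEq (Filter.Eventually.of_forall fun s => ?_)
  · unfold Uf1
    field_simp
    ring
  · simp [Uf, div_eq_mul_inv, mul_comm, mul_assoc, mul_left_comm]

private lemma hasDerivAt_Uf1 {p r : ℝ} (hr : 0 < r) :
    HasDerivAt (Uf1 p) (Uf2 p r) r := by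
  have h : (-1:ℝ) < r := by linarith
  have h1 := hasDerivAt_Gf3 (p := p) h
  have h2 := ((hasDerivAt_Gf2 (p := p) h).const_mul (2:ℝ)).div (hasDerivAt_id r) hr.ne'
  have h3 := ((hasDerivAt_Gf1 (p := p) h).const_mul (2:ℝ)).div (hasDerivAt_pow 2 r)
    (by positivity)
  have h4 := (h1.add h2).sub h3
  refine h4.congr_deriv ?_
  unfold Uf2
  simp only [id]
  field_simp
  ring

private lemma Gf1_ge_one {p r : ℝ} (hp : p ≤ 1) (hr : 0 ≤ r) : 1 ≤ Gf1 p r := by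
  unfold Gf1
  have h := Real.rpow_le_one_of_one_le_of_nonpos (by linarith : (1:ℝ) ≤ 1+r)
    (by linarith : p - 1 ≤ 0)
  linarith

private lemma Gf1_le_two {p r : ℝ} (hr : 0 ≤ r) : Gf1 p r ≤ 2 := by
  unfold Gf1
  have h := Real.rpow_nonneg (by linarith : (0:ℝ) ≤ 1+r) (p-1)
  linarith

private lemma Gf2_nonneg {p r : ℝ} (hp : p ≤ 1) (hr : 0 ≤ r) : 0 ≤ Gf2 p r := by
  unfold Gf2
  have h := Real.rpow_nonneg (by linarith : (0:ℝ) ≤ 1+r) (p-2)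
  nlinarith

private lemma Uf_bilap_eq {p r : ℝ} (hr : r ≠ 0) :
    Uf2 p r + 2*(Uf1 p r)/r = Gf4 p r + 4*(Gf3 p r)/r := by
  unfold Uf1 Uf2
  field_simp
  ring

private lemma Gf_bilap_bound {p r μ : ℝ} (hp0 : 0 ≤ p) (hp2 : p < 1) (hp3 : 3 - μ ≤ p)
    (hr : 0 < r) :
    Gf4 p r + 4*(Gf3 p r)/r ≤ -((1-p)*(2-p)) * (1+r)^(-μ-1) := by
  have h1r : (0:ℝ) < 1 + r := by linarith
  have ht : (0:ℝ) < (1+r)^(p-4) := Real.rpow_pos_of_pos h1r _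
  have e3 : (1+r)^(p-3) = (1+r)^(p-4) * (1+r) := by
    rw [show p-3 = (p-4)+1 by ring, Real.rpow_add h1r, Real.rpow_one]
  have e : Gf4 p r + 4*(Gf3 p r)/r
      = (1-p)*(2-p)*(1+r)^(p-4)*((3-p) - 4*(1+r)/r) := by
    unfold Gf3 Gf4
    rw [e3]
    field_simp
    ring
  rw [e]
  have hbr : (3-p) - 4*(1+r)/r ≤ -1 := by
    have h4 : (0:ℝ) < 4/r := by positivity
    have : 4*(1+r)/r = 4 + 4/r := by field_simp; ring
    rw [this]
    linarith
  have hKp : (0:ℝ) < (1-p)*(2-p) := by nlinarith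
  have step1 : (1-p)*(2-p)*(1+r)^(p-4)*((3-p) - 4*(1+r)/r)
      ≤ (1-p)*(2-p)*(1+r)^(p-4)*(-1) := by
    apply mul_le_mul_of_nonneg_left hbr
    positivity
  have step2 : (1+r)^(-μ-1) ≤ (1+r)^(p-4) :=
    Real.rpow_le_rpow_of_exponent_le (by linarith) (by linarith)
  nlinarith [step1, step2, ht]

end MorawetzAux

/-- Construction of the Morawetz weight in dimension 3: if the attractive part of
the radial derivative of `V` is bounded by `M (1+|x|)^{-μ-1}` with `M` small enough
(depending only on `μ > 2`), there is a radial weight `h(x) = h̃(|x|)` with `h̃` of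
class `C⁴`, `h̃', h̃'' ≥ 0`, `h̃'` bounded, whose Hessian is positive semidefinite,
whose Laplacian is `≥ η/|x|`, and with
`(1/4)Δ²h + ∇V·∇h ≤ -c₀ (1+|x|)^{-μ-1}`. -/
theorem stmt_4 (μ : ℝ) (hμ : 2 < μ) :
    ∃ M : ℝ, 0 < M ∧
      ∀ V : EuclideanSpace ℝ (Fin 3) → ℝ, ContDiff ℝ (⊤ : ℕ∞) V →
        (∀ x : EuclideanSpace ℝ (Fin 3), x ≠ 0 →
          max 0 ((inner ℝ x (gradient V x) : ℝ) / ‖x‖) ≤ M * (1 + ‖x‖) ^ (-μ - 1)) →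
        ∃ η : ℝ, 0 < η ∧ ∃ c₀ : ℝ, 0 < c₀ ∧ ∃ h' : ℝ → ℝ,
          ContDiffOn ℝ 4 h' (Set.Ici 0) ∧
          (∀ r ∈ Set.Ici (0:ℝ), 0 ≤ deriv h' r) ∧
          (∀ r ∈ Set.Ici (0:ℝ), 0 ≤ deriv (deriv h') r) ∧
          (∃ B : ℝ, ∀ r ∈ Set.Ici (0:ℝ), deriv h' r ≤ B) ∧
          (∀ x : EuclideanSpace ℝ (Fin 3), x ≠ 0 →
            (∀ v : EuclideanSpace ℝ (Fin 3),
              0 ≤ iteratedFDeriv ℝ 2 (fun y => h' ‖y‖) x ![v, v]) ∧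
            η / ‖x‖ ≤ lap3 (fun y => h' ‖y‖) x ∧
            (1/4) * lap3 (lap3 (fun y => h' ‖y‖)) x
                + (inner ℝ (gradient V x) (gradient (fun y => h' ‖y‖) x) : ℝ)
              ≤ -c₀ * (1 + ‖x‖) ^ (-μ - 1)) := by
  set p := max (1/2 : ℝ) (3 - μ) with hpdef
  have hp1 : (1/2 : ℝ) ≤ p := le_max_left _ _
  have hp2 : p < 1 := max_lt (by norm_num) (by linarith)
  have hp0 : 0 < p := by linarith
  have hp3 : 3 - μ ≤ p := le_max_right _ _
  set K := (1-p)*(2-p) with hKdef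
  have hK : 0 < K := mul_pos (by linarith) (by linarith)
  refine ⟨K/16, by positivity, fun V hV hVb => ?_⟩
  have hdG : ∀ s : ℝ, -1 < s → HasDerivAt (Gf p) (Gf1 p s) s :=
    fun s hs => hasDerivAt_Gf hp0 hs
  refine ⟨1, one_pos, K/8, by positivity, Gf p, ?_, ?_, ?_, ⟨2, ?_⟩, ?_⟩
  · -- C⁴ regularity
    have hC : ContDiffOn ℝ 4 (Gf p) (Set.Ioi (-1)) := by
      intro r hr
      apply ContDiffAt.contDiffWithinAt
      have hne : (1:ℝ)+r ≠ 0 := by have := Set.mem_Ioi.mp hr; linarith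
      have hrp : ContDiffAt ℝ 4 (fun s : ℝ => (1+s)^p) r :=
        (Real.contDiffAt_rpow_const_of_ne hne).comp r (contDiffAt_const.add contDiffAt_id)
      exact (contDiffAt_const.mul contDiffAt_id).add
        ((contDiffAt_const.sub hrp).div_const p)
    exact hC.mono (fun r hr => by
      simp only [Set.mem_Ici] at hr
      simp only [Set.mem_Ioi]
      linarith)
  · -- first derivative nonneg
    intro r hr
    have hr' : (-1:ℝ) < r := by have := Set.mem_Ici.mp hr; linarith
    rw [(hdG r hr').deriv]
    have := Gf1_ge_one hp2.le (Set.mem_Ici.mp hr)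
    linarith
  · -- second derivative nonneg
    intro r hr
    have hr0 := Set.mem_Ici.mp hr
    have hr' : (-1:ℝ) < r := by linarith
    have hev : deriv (Gf p) =ᶠ[nhds r] Gf1 p := by
      filter_upwards [IsOpen.mem_nhds isOpen_Ioi hr'] with s hs
      exact (hdG s hs).deriv
    rw [hev.deriv_eq, (hasDerivAt_Gf1 hr').deriv]
    exact Gf2_nonneg hp2.le hr0
  · -- derivative bounded by 2
    intro r hr
    have hr' : (-1:ℝ) < r := by have := Set.mem_Ici.mp hr; linarith
    rw [(hdG r hr').deriv]
    exact Gf1_le_two (Set.mem_Ici.mp hr)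
  · -- the pointwise estimates
    intro x hx
    have hr : (0:ℝ) < ‖x‖ := norm_pos_iff.2 hx
    have hrm1 : (-1:ℝ) < ‖x‖ := by linarith
    have hd1 : ∀ s : ℝ, 0 < s → HasDerivAt (Gf p) (Gf1 p s) s :=
      fun s hs => hdG s (by linarith)
    have hd2 : HasDerivAt (Gf1 p) (Gf2 p ‖x‖) ‖x‖ := hasDerivAt_Gf1 hrm1
    have hG1a : 1 ≤ Gf1 p ‖x‖ := Gf1_ge_one hp2.le hr.le
    have hG1b : Gf1 p ‖x‖ ≤ 2 := Gf1_le_two hr.le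
    have hG2 : 0 ≤ Gf2 p ‖x‖ := Gf2_nonneg hp2.le hr.le
    refine ⟨?_, ?_, ?_⟩
    · -- Hessian PSD
      intro v
      rw [radial_hessian' hx hd1 hd2 v v]
      have hcs := real_inner_mul_inner_self_le x v
      have hxx : (inner ℝ x x : ℝ) = ‖x‖^2 := real_inner_self_eq_norm_sq x
      have hvv : (inner ℝ v v : ℝ) = ‖v‖^2 := real_inner_self_eq_norm_sq v
      rw [hxx, hvv] at hcs
      have e : (Gf1 p ‖x‖ / ‖x‖) * (inner ℝ v v : ℝ)
          + (Gf2 p ‖x‖ / ‖x‖^2 - Gf1 p ‖x‖ / ‖x‖^3) * ((inner ℝ x v : ℝ) * (inner ℝ x v : ℝ))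
          = (Gf2 p ‖x‖ * ‖x‖ * ((inner ℝ x v : ℝ) * (inner ℝ x v : ℝ))
              + Gf1 p ‖x‖ * (‖x‖^2 * ‖v‖^2 - (inner ℝ x v : ℝ) * (inner ℝ x v : ℝ)))
            / ‖x‖^3 := by
        rw [hvv]
        field_simp
        ring
      rw [e]
      apply div_nonneg _ (by positivity)
      have h1 : 0 ≤ Gf2 p ‖x‖ * ‖x‖ * ((inner ℝ x v : ℝ) * (inner ℝ x v : ℝ)) := by
        apply mul_nonneg (mul_nonneg hG2 hr.le) (mul_self_nonneg _)
      have h2 : 0 ≤ Gf1 p ‖x‖ * (‖x‖^2 * ‖v‖^2 - (inner ℝ x v : ℝ) * (inner ℝ x v : ℝ)) := by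
        apply mul_nonneg (by linarith)
        nlinarith [hcs]
      linarith
    · -- Laplacian lower bound
      rw [radial_lap3' hx hd1 hd2]
      have h1 : (1:ℝ)/‖x‖ ≤ (2 * Gf1 p ‖x‖)/‖x‖ := by
        gcongr
        linarith
      have h2 : 2 * Gf1 p ‖x‖ / ‖x‖ = (2 * Gf1 p ‖x‖)/‖x‖ := by ring
      linarith [hG2, h1, h2.ge]
    · -- bilaplacian + potential term
      have hev : lap3 (fun y : EuclideanSpace ℝ (Fin 3) => Gf p ‖y‖)
          =ᶠ[nhds x] (fun y : EuclideanSpace ℝ (Fin 3) => Uf p ‖y‖) := by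
        filter_upwards [IsOpen.mem_nhds isOpen_compl_singleton hx] with y hy
        have hy' : (y : EuclideanSpace ℝ (Fin 3)) ≠ 0 := hy
        have hry : (0:ℝ) < ‖y‖ := norm_pos_iff.2 hy'
        rw [radial_lap3' hy' hd1 (hasDerivAt_Gf1 (by linarith))]
        unfold Uf
        rfl
      have hll : lap3 (lap3 (fun y : EuclideanSpace ℝ (Fin 3) => Gf p ‖y‖)) x
          = Uf2 p ‖x‖ + 2*(Uf1 p ‖x‖)/‖x‖ := by
        rw [lap3_congr' hev]
        exact radial_lap3' hx (fun s hs => hasDerivAt_Uf hs) (hasDerivAt_Uf1 hr)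
      have hgrad : gradient (fun y : EuclideanSpace ℝ (Fin 3) => Gf p ‖y‖) x
          = (Gf1 p ‖x‖ * ‖x‖⁻¹) • x := radial_gradient' hx (hd1 ‖x‖ hr)
      rw [hll, hgrad, Uf_bilap_eq hr.ne', real_inner_smul_right]
      have hcomm : (inner ℝ (gradient V x) x : ℝ) = (inner ℝ x (gradient V x) : ℝ) :=
        real_inner_comm _ _
      rw [hcomm]
      set q := (inner ℝ x (gradient V x) : ℝ) with hq
      have hVx := hVb x hx
      have hmax : q/‖x‖ ≤ K/16*(1 + ‖x‖)^(-μ-1) := le_trans (le_max_right 0 _) hVx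
      have hmax0 : (0:ℝ) ≤ K/16*(1 + ‖x‖)^(-μ-1) := le_trans (le_max_left 0 _) hVx
      have hb := Gf_bilap_bound hp0.le hp2 hp3 hr
      have hterm : Gf1 p ‖x‖ * ‖x‖⁻¹ * q ≤ 2*(K/16*(1 + ‖x‖)^(-μ-1)) := by
        have e2 : Gf1 p ‖x‖ * ‖x‖⁻¹ * q = Gf1 p ‖x‖ * (q/‖x‖) := by ring
        rw [e2]
        nlinarith [hG1a, hG1b, hmax, hmax0]
      rw [← hKdef] at hb
      linarith [hb, hterm]
end

section
/- Let d ≥ 1, μ > 1, and let V ∈ C¹(ℝ^d; ℝ) satisfy |V(x)| ≤ C(1+|x|)^{-μ} and |∇V(x)| ≤ C(1+|x|)^{-μ-1} for all x. Let q, p : ℝ → ℝ^d be C¹ and solve q'(t) = p(t), p'(t) = −∇V(q(t)); let q⁻, p⁻ ∈ ℝ^d with p⁻ ≠ 0 be such that |q(t) − t p⁻ − q⁻| → 0 and |p(t) − p⁻| → 0 as t → −∞. Let S(t) = ∫₀^t ( (1/2)|p(s)|² − V(q(s)) ) ds and assume S(t) − t|p⁻|²/2 → 0 as t → −∞. Then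 δ(t) := S(t) − ( q(t)·p(t) − q⁻·p⁻ )/2 → 0 as t → −∞. -/
/-!
Write `δ(t) = (S(t) - t‖p⁻‖²/2) - (⟪q - t p⁻ - q⁻, p⟫ + ⟪p⁻, t (p - p⁻)⟫ + ⟪q⁻, p - p⁻⟫) / 2`.
Every term tends to `0` by the asymptotic hypotheses except `t (p(t) - p⁻)`, which needs a rate.
Since `p⁻ ≠ 0`, eventually `‖q(s)‖ ≥ a |s|` with `a = ‖p⁻‖ / 2`, so the force is bounded by
`C (1 - a s)^(-μ-1)`; comparing `p` with an antiderivative of this bound on `[t, u]` and letting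
`t → -∞` gives `‖p(u) - p⁻‖ ≤ C / (a μ) (1 - a u)^(-μ)`, and `μ > 1` makes `u (p(u) - p⁻) → 0`.
-/

open Filter Topology

section

variable {E : Type*} [NormedAddCommGroup E] [NormedSpace ℝ E]

theorem eventually_mul_neg_le_norm {q : ℝ → E} {v w : E} {a : ℝ}
    (hq : Tendsto (fun t => q t - t • v - w) atBot (𝓝 0)) (ha : a < ‖v‖) :
    ∀ᶠ t in atBot, a * -t ≤ ‖q t‖ := by
  have hsmall : ∀ᶠ t in atBot, ‖q t - t • v - w‖ < 1 :=
    (tendsto_zero_iff_norm_tendsto_zero.1 hq).eventually (gt_mem_nhds one_pos)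
  have hfar : ∀ᶠ t in atBot, t ≤ -((‖w‖ + 1) / (‖v‖ - a)) := eventually_le_atBot _
  filter_upwards [hsmall, hfar, eventually_le_atBot 0] with t hsmall hfar ht
  have htri : ‖t • v‖ ≤ ‖q t‖ + ‖q t - t • v - w‖ + ‖w‖ := by
    calc ‖t • v‖ = ‖q t - (q t - t • v - w) - w‖ := by congr 1; abel
      _ ≤ ‖q t‖ + ‖q t - t • v - w‖ + ‖w‖ := norm_sub_le_of_le (norm_sub_le _ _) le_rfl
  have hgap : ‖w‖ + 1 ≤ (‖v‖ - a) * -t := (div_le_iff₀' (sub_pos.2 ha)).1 (le_neg.1 hfar)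
  rw [norm_smul, Real.norm_of_nonpos ht] at htri
  nlinarith

theorem hasDerivAt_one_sub_mul_rpow_neg {a μ s : ℝ} (hs : 0 < 1 - a * s) :
    HasDerivAt (fun s => (1 - a * s) ^ (-μ)) (a * μ * (1 - a * s) ^ (-μ - 1)) s := by
  have hlin : HasDerivAt (fun s => 1 - a * s) (-a) s := by
    simpa using ((hasDerivAt_id s).const_mul a).const_sub 1
  convert hlin.rpow_const (p := -μ) (Or.inl hs.ne') using 1
  ring

theorem norm_sub_le_of_norm_deriv_le_rpow {f f' : ℝ → E} {L : E} {a μ C T u : ℝ}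
    (ha : 0 < a) (hμ : 0 < μ) (hC : 0 ≤ C) (hT : T ≤ 0)
    (hf : ∀ s, HasDerivAt f (f' s) s) (hL : Tendsto f atBot (𝓝 L))
    (hf' : ∀ s ≤ T, ‖f' s‖ ≤ C * (1 - a * s) ^ (-μ - 1)) (hu : u ≤ T) :
    ‖f u - L‖ ≤ C / (a * μ) * (1 - a * u) ^ (-μ) := by
  have hpos : ∀ s ≤ T, 0 < 1 - a * s := fun s hs => by nlinarith
  set B : ℝ → ℝ := fun s => C / (a * μ) * (1 - a * s) ^ (-μ)
  have hB : ∀ s ≤ T, HasDerivAt B (C * (1 - a * s) ^ (-μ - 1)) s := fun s hs => by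
    refine ((hasDerivAt_one_sub_mul_rpow_neg (hpos s hs)).const_mul (C / (a * μ))).congr_deriv ?_
    field_simp
  refine le_of_tendsto (tendsto_const_nhds.sub hL).norm ?_
  filter_upwards [eventually_le_atBot u] with t ht
  have hBt : 0 ≤ B t := by have := hpos t (ht.trans hu); positivity
  have hfence := image_norm_le_of_norm_deriv_right_le_deriv_boundary'
    (f := fun s => f s - f t) (f' := f') (B := fun s => B s - B t) (a := t) (b := u)
    (fun s _ => ((hf s).sub_const (f t)).continuousAt.continuousWithinAt)
    (fun s _ => ((hf s).sub_const (f t)).hasDerivWithinAt)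
    (by simp)
    (fun s hs => ((hB s (hs.2.trans hu)).sub_const (B t)).continuousAt.continuousWithinAt)
    (fun s hs => ((hB s (hs.2.le.trans hu)).sub_const (B t)).hasDerivWithinAt)
    (fun s hs => hf' s (hs.2.le.trans hu)) (x := u) ⟨ht, le_rfl⟩
  linarith

theorem tendsto_smul_of_norm_le_rpow {g : ℝ → E} {a μ K : ℝ} (ha : 0 < a) (hμ : 1 < μ)
    (hg : ∀ᶠ t in atBot, ‖g t‖ ≤ K * (1 - a * t) ^ (-μ)) :
    Tendsto (fun t => t • g t) atBot (𝓝 0) := by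
  have hlin : Tendsto (fun t => 1 - a * t) atBot atTop := by
    simpa [sub_eq_add_neg] using tendsto_atTop_add_const_left atBot 1
      (tendsto_neg_atBot_atTop.const_mul_atTop ha)
  have hmaj : Tendsto (fun t => K / a * (1 - a * t) ^ (1 - μ)) atBot (𝓝 0) := by
    simpa [neg_sub] using ((tendsto_rpow_neg_atTop (sub_pos.2 hμ)).comp hlin).const_mul (K / a)
  refine squeeze_zero_norm' ?_ hmaj
  filter_upwards [hg, eventually_le_atBot 0] with t hgt ht
  have hpos : 0 < 1 - a * t := by nlinarith
  calc ‖t • g t‖ = -t * ‖g t‖ := by rw [norm_smul, Real.norm_of_nonpos ht]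
    _ ≤ (1 - a * t) / a * (K * (1 - a * t) ^ (-μ)) := by
      refine mul_le_mul ?_ hgt (norm_nonneg _) (by positivity)
      rw [le_div_iff₀ ha]; linarith
    _ = K / a * (1 - a * t) ^ (1 - μ) := by
      rw [sub_eq_add_neg 1 μ, Real.rpow_add hpos, Real.rpow_one]; ring

end

theorem tendsto_inner_sub_mul_norm_sq_sub_inner {F : Type*} [NormedAddCommGroup F]
    [InnerProductSpace ℝ F] {q p : ℝ → F} {qm pm : F}
    (hq : Tendsto (fun t => q t - t • pm - qm) atBot (𝓝 0)) (hp : Tendsto p atBot (𝓝 pm))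
    (hdecay : Tendsto (fun t => t • (p t - pm)) atBot (𝓝 0)) :
    Tendsto (fun t => inner ℝ (q t) (p t) - t * ‖pm‖ ^ 2 - inner ℝ qm pm) atBot (𝓝 0) := by
  have hsplit := ((hq.inner (𝕜 := ℝ) hp).add
    ((tendsto_const_nhds (x := pm)).inner (𝕜 := ℝ) hdecay)).add
    ((tendsto_const_nhds (x := qm)).inner (𝕜 := ℝ) (hp.sub_const pm))
  simp only [inner_zero_left, inner_zero_right, sub_self, add_zero] at hsplit
  refine hsplit.congr fun t => ?_
  simp only [inner_sub_left, inner_sub_right, real_inner_smul_left, real_inner_smul_right,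
    real_inner_self_eq_norm_sq]
  ring

theorem stmt_14_general (d : ℕ) (μ C : ℝ) (hμ : 1 < μ) (hC : 0 < C)
    (V : EuclideanSpace ℝ (Fin d) → ℝ)
    (hV1 : ∀ x, ‖gradient V x‖ ≤ C * (1 + ‖x‖) ^ (-μ - 1))
    (q p : ℝ → EuclideanSpace ℝ (Fin d))
    (hp : ∀ t, HasDerivAt p (-(gradient V (q t))) t)
    (qm pm : EuclideanSpace ℝ (Fin d)) (hpm : pm ≠ 0)
    (hq_asym : Filter.Tendsto (fun t : ℝ => ‖q t - t • pm - qm‖) Filter.atBot (nhds 0))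
    (hp_asym : Filter.Tendsto (fun t : ℝ => ‖p t - pm‖) Filter.atBot (nhds 0))
    (S : ℝ → ℝ)
    (hS_asym : Filter.Tendsto (fun t : ℝ => S t - t * ‖pm‖ ^ 2 / 2)
      Filter.atBot (nhds 0)) :
    Filter.Tendsto
      (fun t : ℝ => S t - ((inner ℝ (q t) (p t) : ℝ) - (inner ℝ qm pm : ℝ)) / 2)
      Filter.atBot (nhds 0) := by
  have hq : Tendsto (fun t => q t - t • pm - qm) atBot (𝓝 0) :=
    tendsto_zero_iff_norm_tendsto_zero.2 hq_asym
  have hp_lim : Tendsto p atBot (𝓝 pm) := tendsto_iff_norm_sub_tendsto_zero.2 hp_asym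
  have hpm_pos : 0 < ‖pm‖ := norm_pos_iff.2 hpm
  obtain ⟨T, hT⟩ := eventually_atBot.1
    ((eventually_mul_neg_le_norm hq (half_lt_self hpm_pos)).and (eventually_le_atBot 0))
  have hforce : ∀ s ≤ T, ‖-gradient V (q s)‖ ≤ C * (1 - ‖pm‖ / 2 * s) ^ (-μ - 1) := by
    intro s hs
    obtain ⟨hqs, hs0⟩ := hT s hs
    rw [norm_neg]
    refine (hV1 (q s)).trans (mul_le_mul_of_nonneg_left ?_ hC.le)
    exact Real.rpow_le_rpow_of_nonpos (by nlinarith) (by linarith) (by linarith)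
  have hdecay : Tendsto (fun t => t • (p t - pm)) atBot (𝓝 0) :=
    tendsto_smul_of_norm_le_rpow (half_pos hpm_pos) hμ (eventually_atBot.2 ⟨T, fun u hu =>
      norm_sub_le_of_norm_deriv_le_rpow (half_pos hpm_pos) (by linarith) hC.le (hT T le_rfl).2
        hp hp_lim hforce hu⟩)
  have hcorr := tendsto_inner_sub_mul_norm_sq_sub_inner hq hp_lim hdecay
  have hsum := hS_asym.sub (hcorr.div_const 2)
  rw [zero_div, sub_zero] at hsum
  exact hsum.congr fun t => by ring

/-- Classical scattering phase correction: along a classical trajectory `(q,p)` with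
asymptotic data `(q⁻, p⁻)` at `t → -∞` for a short-range potential, if the action
`S(t) - t|p⁻|²/2` converges to `0`, then
`δ(t) = S(t) - (q(t)·p(t) - q⁻·p⁻)/2 → 0` as `t → -∞`. -/
theorem stmt_14 (d : ℕ) (hd : 1 ≤ d) (μ C : ℝ) (hμ : 1 < μ) (hC : 0 < C)
    (V : EuclideanSpace ℝ (Fin d) → ℝ) (hV : ContDiff ℝ 1 V)
    (hVb : ∀ x, |V x| ≤ C * (1 + ‖x‖) ^ (-μ))
    (hV1 : ∀ x, ‖gradient V x‖ ≤ C * (1 + ‖x‖) ^ (-μ - 1))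
    (q p : ℝ → EuclideanSpace ℝ (Fin d))
    (hq : ∀ t, HasDerivAt q (p t) t)
    (hp : ∀ t, HasDerivAt p (-(gradient V (q t))) t)
    (qm pm : EuclideanSpace ℝ (Fin d)) (hpm : pm ≠ 0)
    (hq_asym : Filter.Tendsto (fun t : ℝ => ‖q t - t • pm - qm‖) Filter.atBot (nhds 0))
    (hp_asym : Filter.Tendsto (fun t : ℝ => ‖p t - pm‖) Filter.atBot (nhds 0))
    (S : ℝ → ℝ)
    (hS : ∀ t, S t = ∫ s in (0:ℝ)..t, ((1/2) * ‖p s‖ ^ 2 - V (q s)))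
    (hS_asym : Filter.Tendsto (fun t : ℝ => S t - t * ‖pm‖ ^ 2 / 2)
      Filter.atBot (nhds 0)) :
    Filter.Tendsto
      (fun t : ℝ => S t - ((inner ℝ (q t) (p t) : ℝ) - (inner ℝ qm pm : ℝ)) / 2)
      Filter.atBot (nhds 0) :=
  stmt_14_general d μ C hμ hC V hV1 q p hp qm pm hpm hq_asym hp_asym S hS_asym
end
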